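/- arXiv:0902.3143 — 7 statements merged into one kernel-verified Lean document; each statement's English description precedes it below -/
import Mathlib

section
/- A metric space carrying the Hilbert distance of a properly convex open subset Ω of ℙⁿ(ℝ) is a complete metric space, and the topology induced by the Hilbert distance coincides with the topology induced from ℙⁿ(ℝ). -/
/-!
Let `s < 0 < 1 < e` be the parameters of the boundary points on the chord `t ↦ x + t • (y - x)`,
so that `d_Ω(x, y) = log (1 + 1/(-s)) + log (1 + 1/(e - 1))`. Closed balls of radii `r, r'` about
`x, y` inside `Ω` give `1/(-s) ≤ ‖y - x‖/r` and `1/(e - 1) ≤ ‖y - x‖/r'`, so `d_Ω` is locally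
controlled by the norm; conversely `-s ≤ diam Ω / ‖y - x‖` gives
`‖y - x‖ ≤ diam Ω (exp d_Ω(x, y) - 1)`. Hence the two topologies agree and a `d_Ω`-Cauchy sequence
converges in the ambient space. Its limit lies in `Ω` by convexity: if `closedBall x r ⊆ Ω`, the
cone over this ball with apex the boundary point `x + e • (y - x)` contains
`closedBall y (r exp (-d_Ω(x, y)))`, so a `d_Ω`-Cauchy sequence stays uniformly far from `∂Ω`.
-/

open Classical

/-- The Hilbert distance of `x, y` in a convex set `Ω`: writing the chord through `x, y`
as `t ↦ x + t • (y - x)`, the boundary points are `p = x + s • (y-x)` and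
`q = x + e • (y-x)` with `s = inf`, `e = sup` of the parameter set, and
`d_Ω(x,y) = ln ((‖p-y‖·‖q-x‖)/(‖p-x‖·‖q-y‖)) = ln (((1-s)·e)/((-s)·(e-1)))`,
with `d_Ω(x,x) = 0`. -/
noncomputable def hilbertDist {n : ℕ} (Ω : Set (EuclideanSpace ℝ (Fin n)))
    (x y : EuclideanSpace ℝ (Fin n)) : ℝ :=
  if x = y then 0 else
    Real.log (((1 - sInf {t : ℝ | x + t • (y - x) ∈ Ω}) * sSup {t : ℝ | x + t • (y - x) ∈ Ω}) /
      ((0 - sInf {t : ℝ | x + t • (y - x) ∈ Ω}) * (sSup {t : ℝ | x + t • (y - x) ∈ Ω} - 1)))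

open Bornology Metric AffineMap Filter Topology

section Chord

variable {E : Type*} [NormedAddCommGroup E] [NormedSpace ℝ E] {Ω : Set E} {x y : E} {r : ℝ}

def chordParams (Ω : Set E) (x y : E) : Set ℝ := lineMap x y ⁻¹' Ω

lemma zero_mem_chordParams (hx : x ∈ Ω) : (0 : ℝ) ∈ chordParams Ω x y := by
  simpa [chordParams] using hx

lemma chordParams_subset_Icc (hb : IsBounded Ω) (hx : x ∈ Ω) (hxy : x ≠ y) :
    chordParams Ω x y ⊆ Set.Icc (-(diam Ω / ‖y - x‖)) (diam Ω / ‖y - x‖) := by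
  intro t ht
  have hm : 0 < ‖y - x‖ := norm_pos_iff.2 (sub_ne_zero.2 hxy.symm)
  have h := dist_le_diam_of_mem hb ht hx
  rw [dist_lineMap_left, Real.norm_eq_abs, dist_eq_norm', ← le_div_iff₀ hm] at h
  exact abs_le.1 h

lemma bddBelow_chordParams (hb : IsBounded Ω) (hx : x ∈ Ω) (hxy : x ≠ y) :
    BddBelow (chordParams Ω x y) :=
  bddBelow_Icc.mono (chordParams_subset_Icc hb hx hxy)

lemma bddAbove_chordParams (hb : IsBounded Ω) (hx : x ∈ Ω) (hxy : x ≠ y) :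
    BddAbove (chordParams Ω x y) :=
  bddAbove_Icc.mono (chordParams_subset_Icc hb hx hxy)

lemma neg_sInf_chordParams_le (hb : IsBounded Ω) (hx : x ∈ Ω) (hxy : x ≠ y) :
    -sInf (chordParams Ω x y) ≤ diam Ω / ‖y - x‖ :=
  neg_le.1 <| le_csInf ⟨0, zero_mem_chordParams hx⟩ fun _ ht ↦
    (chordParams_subset_Icc hb hx hxy ht).1

lemma div_le_neg_sInf_chordParams (hb : IsBounded Ω) (hxy : x ≠ y)
    (hr : closedBall x r ⊆ Ω) (hr0 : 0 ≤ r) :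
    r / ‖y - x‖ ≤ -sInf (chordParams Ω x y) := by
  have hm : 0 < ‖y - x‖ := norm_pos_iff.2 (sub_ne_zero.2 hxy.symm)
  refine le_neg.1 (csInf_le (bddBelow_chordParams hb (hr (mem_closedBall_self hr0)) hxy) ?_)
  apply hr
  rw [mem_closedBall, dist_lineMap_left, dist_eq_norm', norm_neg, Real.norm_eq_abs,
    abs_of_nonneg (by positivity), div_mul_cancel₀ _ hm.ne']

lemma one_add_div_le_sSup_chordParams (hb : IsBounded Ω) (hx : x ∈ Ω) (hxy : x ≠ y)
    (hr : closedBall y r ⊆ Ω) (hr0 : 0 ≤ r) :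
    1 + r / ‖y - x‖ ≤ sSup (chordParams Ω x y) := by
  have hm : 0 < ‖y - x‖ := norm_pos_iff.2 (sub_ne_zero.2 hxy.symm)
  refine le_csSup (bddAbove_chordParams hb hx hxy) (hr ?_)
  rw [mem_closedBall, dist_lineMap_right, dist_eq_norm', sub_add_cancel_left, norm_neg,
    Real.norm_eq_abs, abs_of_nonneg (by positivity), div_mul_cancel₀ _ hm.ne']

lemma sInf_chordParams_neg (hopen : IsOpen Ω) (hb : IsBounded Ω) (hx : x ∈ Ω) (hxy : x ≠ y) :
    sInf (chordParams Ω x y) < 0 := by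
  obtain ⟨r, hr0, hr⟩ := nhds_basis_closedBall.mem_iff.1 (hopen.mem_nhds hx)
  have hm : 0 < ‖y - x‖ := norm_pos_iff.2 (sub_ne_zero.2 hxy.symm)
  have := div_le_neg_sInf_chordParams hb hxy hr hr0.le
  have : 0 < r / ‖y - x‖ := by positivity
  linarith

lemma one_lt_sSup_chordParams (hopen : IsOpen Ω) (hb : IsBounded Ω) (hx : x ∈ Ω) (hy : y ∈ Ω)
    (hxy : x ≠ y) : 1 < sSup (chordParams Ω x y) := by
  obtain ⟨r, hr0, hr⟩ := nhds_basis_closedBall.mem_iff.1 (hopen.mem_nhds hy)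
  have hm : 0 < ‖y - x‖ := norm_pos_iff.2 (sub_ne_zero.2 hxy.symm)
  have := one_add_div_le_sSup_chordParams hb hx hxy hr hr0.le
  have : 0 < r / ‖y - x‖ := by positivity
  linarith

lemma lineMap_sSup_chordParams_mem_closure (hx : x ∈ Ω) (hT : BddAbove (chordParams Ω x y)) :
    lineMap x y (sSup (chordParams Ω x y)) ∈ closure Ω :=
  map_mem_closure lineMap_continuous (csSup_mem_closure ⟨0, zero_mem_chordParams hx⟩ hT)
    fun _ ht ↦ ht

/-- `closedBall y ((1 - 1/e) r)` is the image of `closedBall x r` under the homothety of ratio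
`1 - 1/e` centred at the boundary point `q = x + e • (y - x)`. -/
lemma closedBall_subset_of_one_lt_sSup_chordParams (hopen : IsOpen Ω) (hconv : Convex ℝ Ω)
    (hr : closedBall x r ⊆ Ω) (hr0 : 0 ≤ r) (hT : BddAbove (chordParams Ω x y))
    (he : 1 < sSup (chordParams Ω x y)) :
    closedBall y ((1 - 1 / sSup (chordParams Ω x y)) * r) ⊆ Ω := by
  set e := sSup (chordParams Ω x y)
  have hq := lineMap_sSup_chordParams_mem_closure (hr (mem_closedBall_self hr0)) hT
  set c := 1 / e
  have hc0 : 0 < c := by positivity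
  have hc1 : 0 < 1 - c := by rw [sub_pos, div_lt_one (by linarith)]; exact he
  have hce : c * e = 1 := one_div_mul_cancel (by positivity)
  intro w hw
  set v := x + (1 - c)⁻¹ • (w - y)
  have hv : v ∈ interior Ω := by
    rw [hopen.interior_eq]
    apply hr
    rw [mem_closedBall, dist_eq_norm, add_sub_cancel_left, norm_smul, Real.norm_eq_abs,
      abs_inv, abs_of_pos hc1, inv_mul_le_iff₀ hc1, ← dist_eq_norm]
    exact hw
  have hcombo : w = (1 - c) • v + c • lineMap x y e := by
    rw [lineMap_apply_module, smul_add, smul_add, smul_smul, smul_smul, smul_smul,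
      mul_inv_cancel₀ hc1.ne', mul_sub, mul_one, hce]
    module
  rw [hcombo, ← hopen.interior_eq]
  exact hconv.combo_interior_closure_mem_interior hv hq hc1 hc0.le (by ring)

end Chord

section Hilbert

variable {n : ℕ} {Ω : Set (EuclideanSpace ℝ (Fin n))} {x y z : EuclideanSpace ℝ (Fin n)}
  {r r' : ℝ}

@[simp]
lemma hilbertDist_self (Ω : Set (EuclideanSpace ℝ (Fin n))) (x : EuclideanSpace ℝ (Fin n)) :
    hilbertDist Ω x x = 0 := by
  simp [hilbertDist]

lemma hilbertDist_eq_log_add_log (hxy : x ≠ y) (hs : sInf (chordParams Ω x y) < 0)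
    (he : 1 < sSup (chordParams Ω x y)) :
    hilbertDist Ω x y = Real.log (1 + 1 / -sInf (chordParams Ω x y)) +
      Real.log (1 + 1 / (sSup (chordParams Ω x y) - 1)) := by
  have hT : {t : ℝ | x + t • (y - x) ∈ Ω} = chordParams Ω x y := by
    ext t
    simp [chordParams, lineMap_apply, add_comm]
  have hs' : 0 < -sInf (chordParams Ω x y) := by linarith
  have he' : 0 < sSup (chordParams Ω x y) - 1 := by linarith
  rw [hilbertDist, if_neg hxy, hT, ← Real.log_mul (by positivity) (by positivity)]
  congr 1
  field_simp [hs.ne, he'.ne']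
  ring

lemma norm_sub_le_diam_mul_exp_hilbertDist (hopen : IsOpen Ω) (hb : IsBounded Ω) (hx : x ∈ Ω)
    (hy : y ∈ Ω) : ‖y - x‖ ≤ diam Ω * (Real.exp (hilbertDist Ω x y) - 1) := by
  rcases eq_or_ne x y with rfl | hxy
  · simp
  have hs := sInf_chordParams_neg hopen hb hx hxy
  have he := one_lt_sSup_chordParams hopen hb hx hy hxy
  set s := sInf (chordParams Ω x y)
  have hs' : 0 < -s := by linarith
  have hsD : -s * ‖y - x‖ ≤ diam Ω := by
    have hm : 0 < ‖y - x‖ := norm_pos_iff.2 (sub_ne_zero.2 hxy.symm)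
    rw [← le_div_iff₀ hm]
    exact neg_sInf_chordParams_le hb hx hxy
  have hB : 0 ≤ Real.log (1 + 1 / (sSup (chordParams Ω x y) - 1)) :=
    Real.log_nonneg (le_add_of_nonneg_right (one_div_nonneg.2 (by linarith)))
  have hA : 1 + 1 / -s ≤ Real.exp (hilbertDist Ω x y) := by
    rw [hilbertDist_eq_log_add_log hxy hs he, Real.exp_add,
      Real.exp_log (by positivity)]
    exact le_mul_of_one_le_right (by positivity) (Real.one_le_exp hB)
  calc ‖y - x‖ = -s * ‖y - x‖ * (1 / -s) := by field_simp [hs.ne]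
    _ ≤ diam Ω * (1 / -s) := by gcongr
    _ ≤ diam Ω * (Real.exp (hilbertDist Ω x y) - 1) :=
      mul_le_mul_of_nonneg_left (by linarith) diam_nonneg

lemma hilbertDist_le_div_add_div (hb : IsBounded Ω) (hx : closedBall x r ⊆ Ω)
    (hy : closedBall y r' ⊆ Ω) (hr : 0 < r) (hr' : 0 < r') :
    hilbertDist Ω x y ≤ ‖y - x‖ / r + ‖y - x‖ / r' := by
  rcases eq_or_ne x y with rfl | hxy
  · simp
  have hm : 0 < ‖y - x‖ := norm_pos_iff.2 (sub_ne_zero.2 hxy.symm)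
  have hs := div_le_neg_sInf_chordParams hb hxy hx hr.le
  have he := one_add_div_le_sSup_chordParams hb (hx (mem_closedBall_self hr.le)) hxy hy hr'.le
  set s := sInf (chordParams Ω x y)
  set e := sSup (chordParams Ω x y)
  have hs0 : 0 < r / ‖y - x‖ := by positivity
  have he0 : 0 < r' / ‖y - x‖ := by positivity
  rw [hilbertDist_eq_log_add_log hxy (by linarith) (by linarith)]
  have hlog (a : ℝ) (ha : 0 < a) : Real.log (1 + 1 / a) ≤ 1 / a := by
    have := Real.log_le_sub_one_of_pos (by positivity : 0 < 1 + 1 / a)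
    linarith
  calc Real.log (1 + 1 / -s) + Real.log (1 + 1 / (e - 1))
      ≤ 1 / -s + 1 / (e - 1) := add_le_add (hlog _ (by linarith)) (hlog _ (by linarith))
    _ ≤ 1 / (r / ‖y - x‖) + 1 / (r' / ‖y - x‖) := by gcongr; linarith
    _ = ‖y - x‖ / r + ‖y - x‖ / r' := by rw [one_div_div, one_div_div]

lemma closedBall_exp_neg_hilbertDist_subset (hopen : IsOpen Ω) (hconv : Convex ℝ Ω)
    (hb : IsBounded Ω) (hx : closedBall x r ⊆ Ω) (hr : 0 ≤ r) (hy : y ∈ Ω) :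
    closedBall y (r * Real.exp (-hilbertDist Ω x y)) ⊆ Ω := by
  rcases eq_or_ne x y with rfl | hxy
  · simpa using hx
  have hx' := hx (mem_closedBall_self hr)
  have hs := sInf_chordParams_neg hopen hb hx' hxy
  have he := one_lt_sSup_chordParams hopen hb hx' hy hxy
  set e := sSup (chordParams Ω x y)
  have he' : 0 < e - 1 := by linarith
  have hA : 0 ≤ Real.log (1 + 1 / -sInf (chordParams Ω x y)) :=
    Real.log_nonneg (le_add_of_nonneg_right (one_div_nonneg.2 (by linarith)))
  have hexp : Real.exp (-hilbertDist Ω x y) ≤ 1 - 1 / e := by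
    calc Real.exp (-hilbertDist Ω x y) ≤ Real.exp (-Real.log (1 + 1 / (e - 1))) := by
          rw [hilbertDist_eq_log_add_log hxy hs he]
          gcongr
          linarith
      _ = 1 - 1 / e := by
          rw [Real.exp_neg, Real.exp_log (by positivity)]
          field_simp
          ring
  refine (closedBall_subset_closedBall ?_).trans
    (closedBall_subset_of_one_lt_sSup_chordParams hopen hconv hx hr
      (bddAbove_chordParams hb hx' hxy) he)
  rw [mul_comm]
  exact mul_le_mul_of_nonneg_right hexp hr

lemma exists_pos_forall_hilbertDist_lt_imp_norm_lt (hopen : IsOpen Ω) (hb : IsBounded Ω)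
    {ε : ℝ} (hε : 0 < ε) :
    ∃ δ > 0, ∀ x ∈ Ω, ∀ y ∈ Ω, hilbertDist Ω x y < δ → ‖y - x‖ < ε := by
  set D := diam Ω
  have hD : 0 ≤ D := diam_nonneg
  refine ⟨Real.log (1 + ε / (D + 1)), Real.log_pos (by simp; positivity), fun x hx y hy hd ↦ ?_⟩
  have hexp : Real.exp (hilbertDist Ω x y) < 1 + ε / (D + 1) := by
    rwa [← Real.lt_log_iff_exp_lt (by positivity)]
  calc ‖y - x‖ ≤ D * (Real.exp (hilbertDist Ω x y) - 1) :=
        norm_sub_le_diam_mul_exp_hilbertDist hopen hb hx hy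
    _ ≤ D * (ε / (D + 1)) := by gcongr; linarith
    _ < ε := by rw [mul_div_assoc', div_lt_iff₀ (by positivity)]; nlinarith

lemma exists_pos_forall_norm_lt_imp_hilbertDist_lt (hopen : IsOpen Ω) (hb : IsBounded Ω)
    (hz : z ∈ Ω) {ε : ℝ} (hε : 0 < ε) :
    ∃ δ > 0, ∀ y, ‖y - z‖ < δ → hilbertDist Ω z y < ε ∧ hilbertDist Ω y z < ε := by
  obtain ⟨r, hr, hzr⟩ := nhds_basis_closedBall.mem_iff.1 (hopen.mem_nhds hz)
  refine ⟨min (r / 2) (ε * r / 3), by positivity, fun y hyz ↦ ?_⟩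
  have hyr : closedBall y (r / 2) ⊆ Ω := by
    refine (closedBall_subset_closedBall' ?_).trans hzr
    rw [dist_eq_norm]
    linarith [min_le_left (r / 2) (ε * r / 3)]
  have hsmall : ‖y - z‖ / r + ‖y - z‖ / (r / 2) < ε := by
    have := min_le_right (r / 2) (ε * r / 3)
    rw [div_div_eq_mul_div, ← add_div, div_lt_iff₀ hr]
    linarith
  constructor
  · exact (hilbertDist_le_div_add_div hb hzr hyr hr (by positivity)).trans_lt hsmall
  · refine (hilbertDist_le_div_add_div hb hyr hzr (by positivity) hr).trans_lt ?_
    rw [norm_sub_rev, add_comm]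
    exact hsmall

lemma cauchySeq_of_hilbertDist (hopen : IsOpen Ω) (hb : IsBounded Ω)
    {u : ℕ → EuclideanSpace ℝ (Fin n)} (hu : ∀ k, u k ∈ Ω)
    (hcauchy : ∀ ε : ℝ, 0 < ε → ∃ N, ∀ k ≥ N, ∀ l ≥ N, hilbertDist Ω (u k) (u l) < ε) :
    CauchySeq u := by
  refine Metric.cauchySeq_iff.2 fun ε hε ↦ ?_
  obtain ⟨δ, hδ, hnorm⟩ := exists_pos_forall_hilbertDist_lt_imp_norm_lt hopen hb hε
  obtain ⟨N, hN⟩ := hcauchy δ hδ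
  exact ⟨N, fun k hk l hl ↦ by
    rw [dist_eq_norm]; exact hnorm _ (hu l) _ (hu k) (hN l hl k hk)⟩

lemma exists_pos_eventually_closedBall_subset (hopen : IsOpen Ω) (hconv : Convex ℝ Ω)
    (hb : IsBounded Ω) {u : ℕ → EuclideanSpace ℝ (Fin n)} (hu : ∀ k, u k ∈ Ω)
    (hcauchy : ∀ ε : ℝ, 0 < ε → ∃ N, ∀ k ≥ N, ∀ l ≥ N, hilbertDist Ω (u k) (u l) < ε) :
    ∃ ρ > 0, ∀ᶠ k in atTop, closedBall (u k) ρ ⊆ Ω := by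
  obtain ⟨N, hN⟩ := hcauchy 1 one_pos
  obtain ⟨r, hr, hNr⟩ := nhds_basis_closedBall.mem_iff.1 (hopen.mem_nhds (hu N))
  refine ⟨r * Real.exp (-1), by positivity, eventually_atTop.2 ⟨N, fun k hk ↦ ?_⟩⟩
  refine (closedBall_subset_closedBall ?_).trans
    (closedBall_exp_neg_hilbertDist_subset hopen hconv hb hNr hr.le (hu k))
  gcongr
  exact (hN N le_rfl k hk).le

end Hilbert

lemma mem_of_tendsto_of_eventually_closedBall_subset {α ι : Type*} [PseudoMetricSpace α]
    {l : Filter ι} [l.NeBot] {u : ι → α} {z : α} {s : Set α} {ρ : ℝ}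
    (hu : Tendsto u l (𝓝 z)) (hρ : 0 < ρ) (hs : ∀ᶠ k in l, closedBall (u k) ρ ⊆ s) : z ∈ s := by
  obtain ⟨k, hkz, hks⟩ := ((hu.eventually (closedBall_mem_nhds z hρ)).and hs).exists
  exact hks (mem_closedBall_comm.1 hkz)

theorem hilbertDist_complete_and_topology_general {n : ℕ} (Ω : Set (EuclideanSpace ℝ (Fin n)))
    (hopen : IsOpen Ω) (hconv : Convex ℝ Ω) (hbdd : Bornology.IsBounded Ω) :
    -- completeness: every Cauchy sequence for `d_Ω` converges in `Ω` for `d_Ω`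
    (∀ u : ℕ → EuclideanSpace ℝ (Fin n), (∀ k, u k ∈ Ω) →
      (∀ ε : ℝ, 0 < ε → ∃ N, ∀ k ≥ N, ∀ l ≥ N, hilbertDist Ω (u k) (u l) < ε) →
      ∃ z ∈ Ω, ∀ ε : ℝ, 0 < ε → ∃ N, ∀ k ≥ N, hilbertDist Ω (u k) z < ε) ∧
    -- the topology induced by `d_Ω` coincides with the ambient topology
    (∀ x ∈ Ω, ∀ ε : ℝ, 0 < ε →
      (∃ δ : ℝ, 0 < δ ∧ ∀ y ∈ Ω, hilbertDist Ω x y < δ → ‖y - x‖ < ε) ∧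
      (∃ δ : ℝ, 0 < δ ∧ ∀ y ∈ Ω, ‖y - x‖ < δ → hilbertDist Ω x y < ε)) := by
  refine ⟨fun u hu hcauchy ↦ ?_, fun x hx ε hε ↦ ?_⟩
  · obtain ⟨z, hz⟩ := cauchySeq_tendsto_of_complete (cauchySeq_of_hilbertDist hopen hbdd hu hcauchy)
    obtain ⟨ρ, hρ, hball⟩ := exists_pos_eventually_closedBall_subset hopen hconv hbdd hu hcauchy
    have hzΩ := mem_of_tendsto_of_eventually_closedBall_subset hz hρ hball
    refine ⟨z, hzΩ, fun ε hε ↦ ?_⟩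
    obtain ⟨δ, hδ, hclose⟩ := exists_pos_forall_norm_lt_imp_hilbertDist_lt hopen hbdd hzΩ hε
    obtain ⟨N, hN⟩ := Metric.tendsto_atTop.1 hz δ hδ
    exact ⟨N, fun k hk ↦ (hclose (u k) (by rw [← dist_eq_norm]; exact hN k hk)).2⟩
  · obtain ⟨δ, hδ, hnorm⟩ := exists_pos_forall_hilbertDist_lt_imp_norm_lt hopen hbdd hε
    obtain ⟨δ', hδ', hclose⟩ := exists_pos_forall_norm_lt_imp_hilbertDist_lt hopen hbdd hx hε
    exact ⟨⟨δ, hδ, hnorm x hx⟩, ⟨δ', hδ', fun y _ hy ↦ (hclose y hy).1⟩⟩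

/-- For a properly convex open `Ω` (a nonempty bounded convex open set in an affine chart),
`(Ω, d_Ω)` is a complete metric space, and the topology induced by the Hilbert distance
`d_Ω` coincides with the topology induced from the ambient (projective) space. -/
theorem hilbertDist_complete_and_topology {n : ℕ} (Ω : Set (EuclideanSpace ℝ (Fin n)))
    (hopen : IsOpen Ω) (hconv : Convex ℝ Ω) (hbdd : Bornology.IsBounded Ω)
    (hne : Ω.Nonempty) :
    -- completeness: every Cauchy sequence for `d_Ω` converges in `Ω` for `d_Ω`
    (∀ u : ℕ → EuclideanSpace ℝ (Fin n), (∀ k, u k ∈ Ω) →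
      (∀ ε : ℝ, 0 < ε → ∃ N, ∀ k ≥ N, ∀ l ≥ N, hilbertDist Ω (u k) (u l) < ε) →
      ∃ z ∈ Ω, ∀ ε : ℝ, 0 < ε → ∃ N, ∀ k ≥ N, hilbertDist Ω (u k) z < ε) ∧
    -- the topology induced by `d_Ω` coincides with the ambient topology
    (∀ x ∈ Ω, ∀ ε : ℝ, 0 < ε →
      (∃ δ : ℝ, 0 < δ ∧ ∀ y ∈ Ω, hilbertDist Ω x y < δ → ‖y - x‖ < ε) ∧
      (∃ δ : ℝ, 0 < δ ∧ ∀ y ∈ Ω, ‖y - x‖ < δ → hilbertDist Ω x y < ε)) :=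
  hilbertDist_complete_and_topology_general Ω hopen hconv hbdd
end

section
/- Let C be a proper open convex cone in ℝ^{n+1} (containing no affine line) with dual cone C* = {f : ∀ v ∈ closure(C)∖{0}, f(v) > 0}. Then the characteristic function φ_C(M) = ∫_{C*} e^{−f(M)} df is well-defined (finite) for every M ∈ C. -/
open MeasureTheory
open scoped RealInnerProductSpace

/-!
If the ball of radius `ε` about `M` lies in `C`, then testing a functional `f` of the dual cone
against the point `M - (ε / 2) • f / ‖f‖` of that ball gives `⟪f, M⟫ ≥ (ε / 2) ‖f‖`. Hence
`e^{-⟪f, M⟫}` is dominated on the dual cone by `e^{-(ε / 2) ‖f‖}`, which is integrable on the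
whole space by polar coordinates.
-/

section ExpNegNorm

variable {E : Type*} [NormedAddCommGroup E] [NormedSpace ℝ E] [FiniteDimensional ℝ E]
  [MeasurableSpace E] [BorelSpace E] (μ : Measure E) [μ.IsAddHaarMeasure]

theorem integrable_exp_neg_mul_norm {b : ℝ} (hb : 0 < b) :
    Integrable (fun x : E => Real.exp (-(b * ‖x‖))) μ := by
  rcases subsingleton_or_nontrivial E with _ | _
  · exact (integrable_const (1 : ℝ)).mono' (by fun_prop)
      (.of_forall fun x => by simp [Subsingleton.elim x 0])
  refine (integrable_fun_norm_addHaar μ (f := fun y => Real.exp (-(b * y)))).2 ?_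
  refine (integrableOn_rpow_mul_exp_neg_mul_rpow (s := (Module.finrank ℝ E - 1 : ℕ))
    (neg_one_lt_zero.trans_le (Nat.cast_nonneg _)) one_pos hb).congr_fun (fun y _ => ?_)
    measurableSet_Ioi
  simp [Real.rpow_natCast, neg_mul]

end ExpNegNorm

section DualCone

variable {E : Type*} [NormedAddCommGroup E] [InnerProductSpace ℝ E]

theorem convex_setOf_forall_inner_pos (K : Set E) :
    Convex ℝ {f : E | ∀ v ∈ K, v ≠ 0 → 0 < ⟪f, v⟫} := by
  simp only [Set.ofPred_forall]
  exact convex_iInter₂ fun v _ => convex_iInter fun _ =>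
    convex_halfSpace_gt ⟨fun x y => inner_add_left x y v, fun c x => real_inner_smul_left x v c⟩ 0

theorem mul_norm_le_inner_of_closedBall_subset {K : Set E} {M f : E} {r : ℝ} (hr : 0 ≤ r)
    (hK : Metric.closedBall M r ⊆ K) (hf : ∀ v ∈ K, v ≠ 0 → 0 < ⟪f, v⟫) :
    r * ‖f‖ ≤ ⟪f, M⟫ := by
  rcases eq_or_ne f 0 with rfl | hf0
  · simp
  set v := M - (r / ‖f‖) • f
  have hvK : v ∈ K := hK <| by
    rw [Metric.mem_closedBall, dist_eq_norm, sub_sub_cancel_left, norm_neg, norm_smul,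
      Real.norm_of_nonneg (by positivity), div_mul_cancel₀ _ (norm_ne_zero_iff.2 hf0)]
  have hinner : ⟪f, v⟫ = ⟪f, M⟫ - r * ‖f‖ := by
    rw [inner_sub_right, real_inner_smul_right, real_inner_self_eq_norm_sq]
    field_simp
  -- `v = 0` is possible when `M` is on the ray of `f`; then the bound is an equality.
  have hv : 0 ≤ ⟪f, v⟫ := by
    rcases eq_or_ne v 0 with hv0 | hv0
    · simp [hv0]
    · exact (hf v hvK hv0).le
  linarith

end DualCone

theorem characteristic_function_integrable_general {n : ℕ}
    (C : Set (EuclideanSpace ℝ (Fin (n + 1))))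
    (hopen : IsOpen C) :
    ∀ M ∈ C,
      IntegrableOn (fun f => Real.exp (-⟪f, M⟫))
        {f : EuclideanSpace ℝ (Fin (n + 1)) | ∀ v ∈ closure C, v ≠ 0 → 0 < ⟪f, v⟫}
        volume := by
  intro M hM
  obtain ⟨ε, hε, hball⟩ := Metric.isOpen_iff.1 hopen M hM
  have hclosedBall : Metric.closedBall M (ε / 2) ⊆ closure C :=
    ((Metric.closedBall_subset_ball (half_lt_self hε)).trans hball).trans subset_closure
  have hmeas := (convex_setOf_forall_inner_pos (closure C)).nullMeasurableSet volume
  refine (integrable_exp_neg_mul_norm volume (half_pos hε)).integrableOn.mono' (by fun_prop) ?_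
  filter_upwards [ae_restrict_mem₀ hmeas] with f hf
  rw [Real.norm_eq_abs, Real.abs_exp]
  exact Real.exp_le_exp.2 <| neg_le_neg <|
    mul_norm_le_inner_of_closedBall_subset (half_pos hε).le hclosedBall hf

/-- Let `C` be a proper open convex cone in `ℝ^{n+1}` (open, convex, invariant under
positive scalar multiplication, containing no affine line), with dual cone
`C* = {f | ∀ v ∈ closure C ∖ {0}, f(v) > 0}` (linear functionals being identified with
vectors via the inner product).  Then the characteristic function
`φ_C(M) = ∫_{C*} e^{-f(M)} df` is well-defined (finite) for every `M ∈ C`, i.e. the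
integrand is integrable on `C*`. -/
theorem characteristic_function_integrable {n : ℕ}
    (C : Set (EuclideanSpace ℝ (Fin (n + 1))))
    (hopen : IsOpen C) (hconv : Convex ℝ C)
    (hcone : ∀ v ∈ C, ∀ r : ℝ, 0 < r → r • v ∈ C)
    (hline : ¬ ∃ a b : EuclideanSpace ℝ (Fin (n + 1)), b ≠ 0 ∧ ∀ t : ℝ, a + t • b ∈ C) :
    ∀ M ∈ C,
      IntegrableOn (fun f => Real.exp (-⟪f, M⟫))
        {f : EuclideanSpace ℝ (Fin (n + 1)) | ∀ v ∈ closure C, v ≠ 0 → 0 < ⟪f, v⟫}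
        volume :=
  characteristic_function_integrable_general C hopen
end

section
/- For a proper open convex cone C in ℝ^{n+1}, the characteristic function φ_C(M) = ∫_{C*} e^{−f(M)} df tends to +∞ as M tends to a boundary point M_∞ of C: liminf_{M → M_∞} φ_C(M) = +∞. -/
/-!
Since `C` contains no line, its closure is a salient closed cone, so by the bipolar theorem its
dual cone has nonempty interior and `C*` contains a ball `B(g, ε)`. A supporting hyperplane at
`M∞` gives `u ≠ 0` in the closed dual cone with `⟪u, M∞⟫ = 0`; then `C*` contains the disjoint
balls `B(g + k w, ε)` (`w ∈ ℝ₊ u`, `k ∈ ℕ`), on all of which `e^{-⟪f, M∞⟫}` has the same positive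
lower bound, so `∫_{C*} e^{-⟪f, M∞⟫} df = ∞`. For `M ∈ C` the integrand is at most `e^{-ρ‖f‖}`
on `C*`, hence integrable, and Fatou's lemma gives `liminf_{M → M∞} φ_C(M) = ∞`.
-/

open MeasureTheory Metric Filter Topology
open scoped RealInnerProductSpace Nat ENNReal

theorem Real.exp_neg_mul_le_mul_one_add_rpow_neg {ρ s : ℝ} (hρ : 0 < ρ) (hs : 0 ≤ s) (k : ℕ) :
    Real.exp (-(ρ * s)) ≤ Real.exp ρ * k ! / ρ ^ k * (1 + s) ^ (-(k : ℝ)) := by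
  have hpow : 0 < (1 + s) ^ k := by positivity
  rw [Real.rpow_neg (by positivity), Real.rpow_natCast, ← div_eq_mul_inv, le_div_iff₀ hpow,
    le_div_iff₀ (by positivity)]
  calc Real.exp (-(ρ * s)) * (1 + s) ^ k * ρ ^ k = Real.exp (-(ρ * s)) * (ρ * (1 + s)) ^ k := by
        rw [mul_pow]; ring
    _ ≤ Real.exp (-(ρ * s)) * (Real.exp (ρ * (1 + s)) * k !) := by
        gcongr
        exact (div_le_iff₀ (by positivity)).mp (Real.pow_div_factorial_le_exp _ (by positivity) k)
    _ = Real.exp ρ * k ! := by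
        rw [mul_one_add, Real.exp_add, Real.exp_neg]
        field_simp

theorem tendsto_integral_atTop_of_lintegral_eq_top {ι α : Type*} [MeasurableSpace α]
    {μ : Measure α} {l : Filter ι} [l.IsCountablyGenerated] [l.NeBot] {F : ι → α → ℝ}
    {G : α → ℝ} (hF_meas : ∀ i, AEStronglyMeasurable (F i) μ)
    (hF_int : ∀ᶠ i in l, Integrable (F i) μ) (hF_nonneg : ∀ i x, 0 ≤ F i x)
    (hF_lim : ∀ x, Tendsto (fun i => F i x) l (𝓝 (G x)))
    (hG : ∫⁻ x, ENNReal.ofReal (G x) ∂μ = ∞) :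
    Tendsto (fun i => ∫ x, F i x ∂μ) l atTop := by
  rw [← ENNReal.tendsto_ofReal_nhds_top]
  refine tendsto_of_le_liminf_of_limsup_le ?_ le_top
  calc ∞ = ∫⁻ x, ENNReal.ofReal (G x) ∂μ := hG.symm
    _ = ∫⁻ x, liminf (fun i => ENNReal.ofReal (F i x)) l ∂μ := lintegral_congr fun x =>
        ((ENNReal.continuous_ofReal.tendsto _).comp (hF_lim x)).liminf_eq.symm
    _ ≤ liminf (fun i => ∫⁻ x, ENNReal.ofReal (F i x) ∂μ) l :=
        lintegral_liminf_le' fun i => (hF_meas i).aemeasurable.ennreal_ofReal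
    _ = liminf (fun i => ENNReal.ofReal (∫ x, F i x ∂μ)) l :=
        liminf_congr (hF_int.mono fun i hi =>
          (ofReal_integral_eq_lintegral_ofReal hi (ae_of_all _ (hF_nonneg i))).symm)

section NormedSpace

variable {F : Type*} [NormedAddCommGroup F] [NormedSpace ℝ F]

theorem integrable_exp_neg_mul_norm_s6 [FiniteDimensional ℝ F] [MeasurableSpace F] [BorelSpace F]
    (μ : Measure F) [μ.IsAddHaarMeasure] {ρ : ℝ} (hρ : 0 < ρ) :
    Integrable (fun x : F => Real.exp (-(ρ * ‖x‖))) μ := by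
  have hdim : (Module.finrank ℝ F : ℝ) < (Module.finrank ℝ F + 1 : ℕ) := by
    push_cast; linarith
  refine ((integrable_one_add_norm hdim).const_mul
    (Real.exp ρ * (Module.finrank ℝ F + 1) ! / ρ ^ (Module.finrank ℝ F + 1))).mono'
    (by fun_prop) (ae_of_all _ fun x => ?_)
  rw [Real.norm_of_nonneg (Real.exp_pos _).le]
  exact Real.exp_neg_mul_le_mul_one_add_rpow_neg hρ (norm_nonneg x) _

theorem measure_iUnion_ball_add_smul_eq_top [MeasurableSpace F] [BorelSpace F]
    (μ : Measure F) [μ.IsAddHaarMeasure] (g w : F) {ε : ℝ} (hε : 0 < ε) (hw : 2 * ε ≤ ‖w‖) :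
    μ (⋃ k : ℕ, ball (g + (k : ℝ) • w) ε) = ∞ := by
  have hdisj : Pairwise (Function.onFun Disjoint fun k : ℕ => ball (g + (k : ℝ) • w) ε) := by
    intro j k hjk
    apply ball_disjoint_ball
    have hjk' : (1 : ℝ) ≤ |(j : ℝ) - k| := by
      have : (1 : ℤ) ≤ |(j : ℤ) - k| := Int.one_le_abs (by omega)
      exact_mod_cast this
    rw [dist_add_left, dist_eq_norm, ← sub_smul, norm_smul, Real.norm_eq_abs]
    nlinarith [norm_nonneg w]
  rw [measure_iUnion hdisj fun k => measurableSet_ball]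
  simp_rw [Measure.addHaar_ball_center μ]
  exact ENNReal.tsum_const_eq_top_of_ne_zero (measure_ball_pos μ 0 hε).ne'

end NormedSpace

variable {E : Type*} [NormedAddCommGroup E] [InnerProductSpace ℝ E]

/-- The dual cone `C*` of the statement is `strictInnerDual (closure C)`. -/
def strictInnerDual (s : Set E) : Set E := {y | ∀ x ∈ s, x ≠ 0 → 0 < ⟪y, x⟫}

theorem interior_innerDual_subset_strictInnerDual [CompleteSpace E] (s : Set E) :
    interior (ProperCone.innerDual s : Set E) ⊆ strictInnerDual s := by
  intro y hy x hx hx0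
  have hlim : Tendsto (fun δ : ℝ => y - δ • x) (𝓝[>] 0) (𝓝 y) :=
    ((continuous_const.sub (continuous_id.smul continuous_const)).tendsto' 0 y
      (by simp)).mono_left nhdsWithin_le_nhds
  obtain ⟨δ, hδD, hδ⟩ := ((hlim.eventually (mem_interior_iff_mem_nhds.mp hy)).and
    self_mem_nhdsWithin).exists
  have hδx := ProperCone.mem_innerDual.mp hδD hx
  rw [inner_sub_right, real_inner_smul_right, real_inner_self_eq_norm_sq] at hδx
  have : 0 < δ * ‖x‖ ^ 2 := mul_pos hδ (by positivity)
  rw [real_inner_comm]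
  linarith

theorem strictInnerDual_subset_innerDual [CompleteSpace E] (s : Set E) :
    strictInnerDual s ⊆ ProperCone.innerDual s := by
  refine fun y hy => ProperCone.mem_innerDual.mpr fun x hx => ?_
  rcases eq_or_ne x 0 with rfl | hx0
  · simp
  · rw [real_inner_comm]; exact (hy x hx hx0).le

theorem add_mem_strictInnerDual [CompleteSpace E] {s : Set E} {y z : E}
    (hy : y ∈ strictInnerDual s) (hz : z ∈ ProperCone.innerDual s) : y + z ∈ strictInnerDual s := by
  intro x hx hx0
  rw [inner_add_left, real_inner_comm x z]
  exact add_pos_of_pos_of_nonneg (hy x hx hx0) (ProperCone.mem_innerDual.mp hz hx)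

namespace ProperCone

theorem span_innerDual_eq_top [FiniteDimensional ℝ E] (K : ProperCone ℝ E)
    (hK : ∀ x ∈ K, -x ∈ K → x = 0) :
    Submodule.span ℝ (innerDual (K : Set E) : Set E) = ⊤ := by
  by_contra hspan
  obtain ⟨u, hu, hu0⟩ := Submodule.exists_mem_ne_zero_of_ne_bot
    (fun h => hspan (Submodule.orthogonal_eq_bot_iff.mp h))
  have hperp : ∀ y ∈ innerDual (K : Set E), ⟪y, u⟫ = 0 := fun y hy =>
    Submodule.inner_right_of_mem_orthogonal (Submodule.subset_span hy) hu
  refine hu0 (hK u ?_ ?_) <;> rw [← innerDual_innerDual K, mem_innerDual] <;> intro y hy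
  · rw [hperp y hy]
  · rw [inner_neg_right, hperp y hy, neg_zero]

theorem interior_innerDual_nonempty [FiniteDimensional ℝ E] (K : ProperCone ℝ E)
    (hK : ∀ x ∈ K, -x ∈ K → x = 0) :
    (interior (innerDual (K : Set E) : Set E)).Nonempty := by
  have h0 : (0 : E) ∈ (innerDual (K : Set E) : Set E) := zero_mem _
  rw [(innerDual (K : Set E)).convex.interior_nonempty_iff_affineSpan_eq_top,
    ← AffineSubspace.coe_eq_univ_iff, ← Set.insert_eq_of_mem h0, affineSpan_insert_zero,
    span_innerDual_eq_top K hK, Submodule.top_coe]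

end ProperCone

section OpenConvexCone

variable {C : Set E}

def convexConeOfConvex (hconv : Convex ℝ C) (hcone : ∀ v ∈ C, ∀ r : ℝ, 0 < r → r • v ∈ C) :
    ConvexCone ℝ E where
  carrier := C
  smul_mem' r hr v hv := hcone v hv r hr
  add_mem' x hx y hy := by
    have hmid := hconv hx hy (by norm_num : (0 : ℝ) ≤ 1 / 2) (by norm_num : (0 : ℝ) ≤ 1 / 2)
      (by norm_num)
    convert hcone _ hmid 2 two_pos using 1
    module

def closureProperCone (hconv : Convex ℝ C) (hcone : ∀ v ∈ C, ∀ r : ℝ, 0 < r → r • v ∈ C)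
    (hC : C.Nonempty) : ProperCone ℝ E :=
  ⟨((convexConeOfConvex hconv hcone).closure).toPointedCone
    (.of_nonempty_of_isClosed hC.closure isClosed_closure), isClosed_closure⟩

theorem add_mem_of_mem_of_mem_closure (hopen : IsOpen C) (hconv : Convex ℝ C)
    (hcone : ∀ v ∈ C, ∀ r : ℝ, 0 < r → r • v ∈ C) {a v : E} (ha : a ∈ C)
    (hv : v ∈ closure C) : a + v ∈ C := by
  have hmid := hconv.combo_interior_closure_mem_interior (hopen.interior_eq.symm ▸ ha) hv
    (by norm_num : (0 : ℝ) < 1 / 2) (by norm_num : (0 : ℝ) ≤ 1 / 2) (by norm_num)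
  rw [hopen.interior_eq] at hmid
  convert hcone _ hmid 2 two_pos using 1
  module

theorem eq_zero_of_mem_closure_of_neg_mem_closure (hopen : IsOpen C) (hconv : Convex ℝ C)
    (hcone : ∀ v ∈ C, ∀ r : ℝ, 0 < r → r • v ∈ C)
    (hline : ¬ ∃ a b : E, b ≠ 0 ∧ ∀ t : ℝ, a + t • b ∈ C) {x : E}
    (hx : x ∈ closure C) (hnx : -x ∈ closure C) : x = 0 := by
  have hC : C.Nonempty := closure_nonempty_iff.mp ⟨x, hx⟩
  set K := closureProperCone hconv hcone hC
  obtain ⟨a, ha⟩ := hC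
  by_contra hx0
  refine hline ⟨a, x, hx0, fun t => add_mem_of_mem_of_mem_closure hopen hconv hcone ha ?_⟩
  rcases le_total 0 t with ht | ht
  · exact K.smul_mem (x := x) hx ht
  · have := K.smul_mem (x := -x) hnx (neg_nonneg.mpr ht)
    rwa [smul_neg, neg_smul, neg_neg] at this

theorem exists_mem_innerDual_inner_eq_zero_of_mem_frontier [CompleteSpace E]
    (hopen : IsOpen C) (hconv : Convex ℝ C) (hcone : ∀ v ∈ C, ∀ r : ℝ, 0 < r → r • v ∈ C)
    {M : E} (hM : M ∈ frontier C) :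
    ∃ u ∈ ProperCone.innerDual (closure C), u ≠ 0 ∧ ⟪u, M⟫ = 0 := by
  rw [hopen.frontier_eq] at hM
  obtain ⟨hMcl, hMC⟩ := hM
  have hC : C.Nonempty := closure_nonempty_iff.mp ⟨M, hMcl⟩
  set K := closureProperCone hconv hcone hC
  obtain ⟨f, hf⟩ := geometric_hahn_banach_open_point hconv hopen hMC
  have hfle : ∀ v ∈ closure C, f v ≤ f M := fun v hv =>
    closure_minimal (fun a ha => (hf a ha).le) (isClosed_le f.continuous continuous_const) hv
  have hfM : f M = 0 := by
    have h2 := hfle _ (K.smul_mem (x := M) hMcl (by norm_num : (0 : ℝ) ≤ 2))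
    have hhalf := hfle _ (K.smul_mem (x := M) hMcl (by norm_num : (0 : ℝ) ≤ 1 / 2))
    simp only [map_smul, smul_eq_mul] at h2 hhalf
    linarith
  set u := -(InnerProductSpace.toDual ℝ E).symm f
  have hu : ∀ v, ⟪v, u⟫ = -f v := fun v => by
    rw [inner_neg_right, real_inner_comm, InnerProductSpace.toDual_symm_apply]
  obtain ⟨a, ha⟩ := hC
  refine ⟨u, fun v hv => ?_, fun hu0 => ?_, ?_⟩
  · simp only [innerₗ_apply_apply, hu]
    linarith [hfle v hv]
  · have := hu a
    rw [hu0, inner_zero_right] at this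
    linarith [hf a ha]
  · rw [real_inner_comm, hu, hfM, neg_zero]

end OpenConvexCone

theorem mul_norm_le_inner_of_closedBall_subset_s6 [CompleteSpace E] {s : Set E} {M y : E} {ρ : ℝ}
    (hρ : 0 ≤ ρ) (hball : closedBall M ρ ⊆ s) (hy : y ∈ ProperCone.innerDual s) :
    ρ * ‖y‖ ≤ ⟪y, M⟫ := by
  rcases eq_or_ne y 0 with rfl | hy0
  · simp
  have hyn : 0 < ‖y‖ := norm_pos_iff.mpr hy0
  have hmem : M - (ρ / ‖y‖) • y ∈ s := hball <| by
    rw [mem_closedBall, dist_eq_norm, sub_sub_cancel_left, norm_neg, norm_smul,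
      Real.norm_of_nonneg (by positivity), div_mul_cancel₀ _ hyn.ne']
  have h := ProperCone.mem_innerDual.mp hy hmem
  rw [inner_sub_left, real_inner_smul_left, real_inner_self_eq_norm_sq, real_inner_comm] at h
  have : ρ / ‖y‖ * ‖y‖ ^ 2 = ρ * ‖y‖ := by field_simp
  linarith

theorem integrableOn_exp_neg_inner_innerDual [CompleteSpace E] [FiniteDimensional ℝ E]
    [MeasurableSpace E] [BorelSpace E] (μ : Measure E) [μ.IsAddHaarMeasure] {s : Set E} {M : E}
    (hM : M ∈ interior s) :
    IntegrableOn (fun y => Real.exp (-⟪y, M⟫)) (ProperCone.innerDual s) μ := by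
  obtain ⟨ρ, hρ, hball⟩ := nhds_basis_closedBall.mem_iff.mp (mem_interior_iff_mem_nhds.mp hM)
  refine (integrable_exp_neg_mul_norm_s6 μ hρ).integrableOn.mono' (by fun_prop)
    ((ae_restrict_iff' (ProperCone.innerDual s).isClosed.measurableSet).mpr
      (ae_of_all _ fun y hy => ?_))
  rw [Real.norm_of_nonneg (Real.exp_pos _).le, Real.exp_le_exp, neg_le_neg_iff]
  exact mul_norm_le_inner_of_closedBall_subset_s6 hρ.le hball hy

theorem setLIntegral_exp_neg_inner_strictInnerDual_eq_top [CompleteSpace E] [MeasurableSpace E]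
    [BorelSpace E] (μ : Measure E) [μ.IsAddHaarMeasure] {s : Set E} {g u M : E} {ε : ℝ}
    (hε : 0 < ε) (hball : ball g ε ⊆ strictInnerDual s) (hu : u ∈ ProperCone.innerDual s)
    (hu0 : u ≠ 0) (huM : ⟪u, M⟫ = 0) :
    ∫⁻ y in strictInnerDual s, ENNReal.ofReal (Real.exp (-⟪y, M⟫)) ∂μ = ∞ := by
  set w := (2 * ε / ‖u‖) • u
  have hw : 2 * ε ≤ ‖w‖ := by
    rw [norm_smul, Real.norm_of_nonneg (by positivity),
      div_mul_cancel₀ _ (norm_ne_zero_iff.mpr hu0)]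
  set U := ⋃ k : ℕ, ball (g + (k : ℝ) • w) ε
  have hmem : ∀ x ∈ U, ∃ k : ℕ, x - (k : ℝ) • w ∈ ball g ε := fun x hx => by
    obtain ⟨k, hk⟩ := Set.mem_iUnion.mp hx
    refine ⟨k, ?_⟩
    rw [mem_ball_iff_norm] at hk ⊢
    rwa [sub_sub, add_comm ((k : ℝ) • w)]
  have hUS : U ⊆ strictInnerDual s := fun x hx => by
    obtain ⟨k, hk⟩ := hmem x hx
    have := add_mem_strictInnerDual (hball hk)
      ((ProperCone.innerDual s).smul_mem hu (by positivity : 0 ≤ (k : ℝ) * (2 * ε / ‖u‖)))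
    rwa [mul_smul, sub_add_cancel] at this
  have hbound : ∀ x ∈ U, ENNReal.ofReal (Real.exp (-((‖g‖ + ε) * ‖M‖))) ≤
      ENNReal.ofReal (Real.exp (-⟪x, M⟫)) := fun x hx => by
    obtain ⟨k, hk⟩ := hmem x hx
    have hnorm : ‖x - (k : ℝ) • w‖ ≤ ‖g‖ + ε := by
      have := norm_le_norm_add_norm_sub' (x - (k : ℝ) • w) g
      rw [mem_ball_iff_norm] at hk
      linarith
    have hinner : ⟪x, M⟫ = ⟪x - (k : ℝ) • w, M⟫ := by
      rw [inner_sub_left, real_inner_smul_left, real_inner_smul_left, huM]; ring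
    gcongr
    rw [hinner]
    exact (real_inner_le_norm _ _).trans (by gcongr)
  refine top_unique ?_
  calc ∞ = ENNReal.ofReal (Real.exp (-((‖g‖ + ε) * ‖M‖))) * μ U := by
        rw [measure_iUnion_ball_add_smul_eq_top μ g w hε hw,
          ENNReal.mul_top (ENNReal.ofReal_pos.mpr (Real.exp_pos _)).ne']
    _ = ∫⁻ _ in U, ENNReal.ofReal (Real.exp (-((‖g‖ + ε) * ‖M‖))) ∂μ :=
        (setLIntegral_const _ _).symm
    _ ≤ ∫⁻ y in U, ENNReal.ofReal (Real.exp (-⟪y, M⟫)) ∂μ :=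
        setLIntegral_mono' (MeasurableSet.iUnion fun _ => measurableSet_ball) hbound
    _ ≤ ∫⁻ y in strictInnerDual s, ENNReal.ofReal (Real.exp (-⟪y, M⟫)) ∂μ :=
        lintegral_mono_set hUS

/-- For a proper open convex cone `C ⊆ ℝ^{n+1}` with dual cone
`C* = {f | ∀ v ∈ closure C ∖ {0}, f(v) > 0}`, the characteristic function
`φ_C(M) = ∫_{C*} e^{-f(M)} df` tends to `+∞` as `M ∈ C` tends to a boundary point
`M_∞` of `C`. -/
theorem characteristic_function_tendsto_atTop_boundary {n : ℕ}
    (C : Set (EuclideanSpace ℝ (Fin (n + 1))))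
    (hopen : IsOpen C) (hconv : Convex ℝ C)
    (hcone : ∀ v ∈ C, ∀ r : ℝ, 0 < r → r • v ∈ C)
    (hline : ¬ ∃ a b : EuclideanSpace ℝ (Fin (n + 1)), b ≠ 0 ∧ ∀ t : ℝ, a + t • b ∈ C) :
    ∀ Minf ∈ frontier C,
      Filter.Tendsto
        (fun M => ∫ f in {f : EuclideanSpace ℝ (Fin (n + 1)) |
            ∀ v ∈ closure C, v ≠ 0 → 0 < ⟪f, v⟫}, Real.exp (-⟪f, M⟫) ∂volume)
        (nhdsWithin Minf C) Filter.atTop := by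
  intro Minf hMinf
  have hMcl := frontier_subset_closure hMinf
  have hC : C.Nonempty := closure_nonempty_iff.mp ⟨Minf, hMcl⟩
  obtain ⟨g, hg⟩ := ProperCone.interior_innerDual_nonempty (closureProperCone hconv hcone hC)
    fun _ => eq_zero_of_mem_closure_of_neg_mem_closure hopen hconv hcone hline
  obtain ⟨ε, hε, hball⟩ := Metric.isOpen_iff.mp isOpen_interior g hg
  obtain ⟨u, hu, hu0, huM⟩ :=
    exists_mem_innerDual_inner_eq_zero_of_mem_frontier hopen hconv hcone hMinf
  have : (𝓝[C] Minf).NeBot := mem_closure_iff_nhdsWithin_neBot.mp hMcl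
  refine tendsto_integral_atTop_of_lintegral_eq_top (G := fun f => Real.exp (-⟪f, Minf⟫))
    (fun _ => by fun_prop) ?_ (fun _ _ => (Real.exp_pos _).le) (fun f => ?_)
    (setLIntegral_exp_neg_inner_strictInnerDual_eq_top volume hε
      (hball.trans (interior_innerDual_subset_strictInnerDual _)) hu hu0 huM)
  · filter_upwards [self_mem_nhdsWithin] with M hM
    exact (integrableOn_exp_neg_inner_innerDual volume
      (hopen.subset_interior_iff.mpr subset_closure hM)).mono_set
      (strictInnerDual_subset_innerDual _)
  · exact ((by fun_prop : Continuous fun M => Real.exp (-⟪f, M⟫)).tendsto Minf).mono_left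
      nhdsWithin_le_nhds
end

section
/- For a proper open convex cone C in ℝ^{n+1}, the Hessian of the characteristic function φ_C(M) = ∫_{C*} e^{−f(M)} df at any point M ∈ C is positive definite: the bilinear form (u,v) ↦ ∫_{C*} f(u) f(v) e^{−f(M)} df is a positive definite symmetric bilinear form. -/
open MeasureTheory Set Filter Topology
open scoped RealInnerProductSpace

/-!
The integrand `⟪f, u⟫² e^{-⟪f, M⟫}` is nonnegative and vanishes only on the hyperplane `u⟂`, a
null set, so it suffices that the dual cone has positive measure and that the integral converges.
Since `C` contains no line, `closure C` is salient, so by the bipolar theorem its dual cone has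
nonempty interior, and interior points of the dual are strictly positive on `closure C ∖ {0}`.
For convergence, a ball around `M` lies in `C`, which gives `c ‖f‖ ≤ ⟪f, M⟫` on the dual cone,
and `‖f‖² e^{-c ‖f‖}` is integrable.
-/

namespace ConvexCone

variable {E : Type*} [AddCommGroup E] [Module ℝ E]

def ofConvex {C : Set E} (hconv : Convex ℝ C) (hcone : ∀ v ∈ C, ∀ r : ℝ, 0 < r → r • v ∈ C) :
    ConvexCone ℝ E where
  carrier := C
  smul_mem' c hc x hx := hcone x hx c hc
  add_mem' x hx y hy := by
    have hmid := hconv hx hy (by norm_num : (0 : ℝ) ≤ 1 / 2) (by norm_num : (0 : ℝ) ≤ 1 / 2)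
      (by norm_num)
    simpa [smul_add, smul_smul] using hcone _ hmid 2 two_pos

section Topological

variable [TopologicalSpace E] [IsTopologicalAddGroup E]

theorem add_mem_of_mem_closure {K : ConvexCone ℝ E} (hK : IsOpen (K : Set E)) {x y : E}
    (hx : x ∈ K) (hy : y ∈ closure (K : Set E)) : x + y ∈ K := by
  have hnhds : {z | x + y - z ∈ K} ∈ 𝓝 y :=
    (hK.preimage (continuous_const.sub continuous_id)).mem_nhds (by simpa using hx)
  obtain ⟨z, hzx, hz⟩ := mem_closure_iff_nhds.1 hy _ hnhds
  simpa using K.add_mem hzx hz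

variable [ContinuousConstSMul ℝ E]

theorem pointed_closure [ContinuousSMul ℝ E] {K : ConvexCone ℝ E} (hne : (K : Set E).Nonempty) :
    K.closure.Pointed := by
  obtain ⟨x, hx⟩ := hne
  have hlim : Tendsto (fun t : ℝ => t • x) (𝓝[>] 0) (𝓝 0) :=
    ((continuous_id.smul continuous_const).tendsto' 0 0 (zero_smul ℝ x)).mono_left
      nhdsWithin_le_nhds
  exact mem_closure_of_tendsto hlim (eventually_nhdsWithin_of_forall fun t ht => K.smul_mem ht hx)

theorem salient_closure {K : ConvexCone ℝ E} (hK : IsOpen (K : Set E))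
    (hne : (K : Set E).Nonempty) (hline : ¬ ∃ a b : E, b ≠ 0 ∧ ∀ t : ℝ, a + t • b ∈ K) :
    K.closure.Salient := by
  intro x hx hx0 hnx
  obtain ⟨a, ha⟩ := hne
  refine hline ⟨a, x, hx0, fun t => ?_⟩
  rcases lt_trichotomy t 0 with ht | rfl | ht
  · simpa using add_mem_of_mem_closure hK ha (K.closure.smul_mem (neg_pos.2 ht) hnx)
  · simpa using ha
  · exact add_mem_of_mem_closure hK ha (K.closure.smul_mem ht hx)

end Topological

end ConvexCone

namespace ProperCone

variable {E : Type*} [NormedAddCommGroup E] [InnerProductSpace ℝ E] [CompleteSpace E]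

theorem inner_pos_of_mem_interior_innerDual {s : Set E} {f w : E}
    (hf : f ∈ interior (innerDual s : Set E)) (hw : w ∈ s) (hw0 : w ≠ 0) : 0 < ⟪w, f⟫ := by
  have hnear : ∀ᶠ t in 𝓝 (0 : ℝ), f - t • w ∈ innerDual s := by
    have hlim : Tendsto (fun t : ℝ => f - t • w) (𝓝 0) (𝓝 f) :=
      (continuous_const.sub (continuous_id.smul continuous_const)).tendsto' 0 f (by simp)
    exact hlim (mem_interior_iff_mem_nhds.1 hf)
  obtain ⟨t, hmem, ht⟩ :=
    ((hnear.filter_mono (nhdsWithin_le_nhds (s := Ioi 0))).and self_mem_nhdsWithin).exists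
  have h := mem_innerDual.1 hmem hw
  rw [inner_sub_right, real_inner_smul_right, real_inner_self_eq_norm_sq] at h
  have : 0 < t * ‖w‖ ^ 2 := mul_pos ht (by positivity)
  linarith

theorem exists_mul_norm_le_inner_of_mem_interior {s : Set E} {M : E} (hM : M ∈ interior s) :
    ∃ c : ℝ, 0 < c ∧ ∀ f ∈ innerDual s, c * ‖f‖ ≤ ⟪f, M⟫ := by
  obtain ⟨ε, hε, hball⟩ := Metric.mem_nhds_iff.1 (mem_interior_iff_mem_nhds.1 hM)
  refine ⟨ε / 2, half_pos hε, fun f hf => ?_⟩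
  rcases eq_or_ne f 0 with rfl | hf0
  · simp
  have hf_norm : ‖f‖ ≠ 0 := norm_ne_zero_iff.2 hf0
  have hw : M - (ε / 2 / ‖f‖) • f ∈ s := hball <| by
    rw [Metric.mem_ball, dist_eq_norm, sub_sub_cancel_left, norm_neg, norm_smul,
      Real.norm_of_nonneg (by positivity), div_mul_cancel₀ _ hf_norm]
    linarith
  have h := mem_innerDual.1 hf hw
  rw [inner_sub_left, real_inner_smul_left, real_inner_self_eq_norm_sq,
    div_mul_eq_mul_div, pow_two, mul_div_assoc, mul_self_div_self] at h
  rw [real_inner_comm]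
  linarith

-- Otherwise the dual lies in a hyperplane `b⟂`, and then `±b` lie in the bidual, which is `K`.
theorem nonempty_interior_innerDual [FiniteDimensional ℝ E] (K : ProperCone ℝ E)
    (hK : (K : ConvexCone ℝ E).Salient) : (interior (innerDual (K : Set E) : Set E)).Nonempty := by
  set D : Set E := (innerDual (K : Set E) : Set E)
  by_contra hem
  have hspan : Submodule.span ℝ D ≠ ⊤ := by
    intro htop
    have haff : affineSpan ℝ D = ⊤ := by
      rw [← AffineSubspace.coe_eq_univ_iff,
        ← insert_eq_of_mem (show (0 : E) ∈ D from (innerDual (K : Set E)).zero_mem),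
        affineSpan_insert_zero, htop]
      simp
    exact hem ((innerDual (K : Set E)).convex.interior_nonempty_iff_affineSpan_eq_top.2 haff)
  obtain ⟨b, hb, hb0⟩ := (Submodule.ne_bot_iff _).1 (mt Submodule.orthogonal_eq_bot_iff.1 hspan)
  have hbK : ∀ r : ℝ, r • b ∈ K := fun r => by
    rw [← innerDual_innerDual K, mem_innerDual]
    intro f hf
    rw [real_inner_smul_right, (Submodule.mem_orthogonal _ b).1 hb f (Submodule.subset_span hf),
      mul_zero]
  exact hK b (by simpa using hbK 1) hb0 (by simpa using hbK (-1))

end ProperCone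

theorem ConvexCone.nonempty_interior_innerDual_closure {E : Type*} [NormedAddCommGroup E]
    [InnerProductSpace ℝ E] [FiniteDimensional ℝ E] {K : ConvexCone ℝ E} (hK : IsOpen (K : Set E))
    (hne : (K : Set E).Nonempty) (hline : ¬ ∃ a b : E, b ≠ 0 ∧ ∀ t : ℝ, a + t • b ∈ K) :
    (interior (ProperCone.innerDual (closure (K : Set E)) : Set E)).Nonempty :=
  have := FiniteDimensional.complete ℝ E
  ProperCone.nonempty_interior_innerDual ⟨K.closure.toPointedCone (K.pointed_closure hne),
    isClosed_closure⟩ (K.salient_closure hK hne hline)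

section Integrals

variable {E : Type*} [NormedAddCommGroup E] [InnerProductSpace ℝ E] [FiniteDimensional ℝ E]
  [MeasurableSpace E] [BorelSpace E] (μ : Measure E) [μ.IsAddHaarMeasure]

theorem integrable_norm_pow_mul_exp_neg_mul_norm [Nontrivial E] (k : ℕ) {c : ℝ} (hc : 0 < c) :
    Integrable (fun x : E => ‖x‖ ^ k * Real.exp (-c * ‖x‖)) μ := by
  rw [integrable_fun_norm_addHaar μ (f := fun y => y ^ k * Real.exp (-c * y))]
  have h := integrableOn_rpow_mul_exp_neg_mul_rpow (s := ((Module.finrank ℝ E - 1 + k : ℕ) : ℝ))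
    (neg_one_lt_zero.trans_le (Nat.cast_nonneg _)) one_pos hc
  refine h.congr_fun (fun y hy => ?_) measurableSet_Ioi
  simp only [Real.rpow_natCast, Real.rpow_one, smul_eq_mul, pow_add]
  ring

theorem measure_inner_eq_zero {u : E} (hu : u ≠ 0) : μ {f | ⟪f, u⟫ = 0} = 0 := by
  have hset : {f | ⟪f, u⟫ = 0} = ((ℝ ∙ u)ᗮ : Set E) := by
    ext f; exact Submodule.mem_orthogonal_singleton_iff_inner_left.symm
  rw [hset]
  refine Measure.addHaar_submodule μ _ fun htop => hu ?_
  rwa [Submodule.orthogonal_eq_top_iff, Submodule.span_singleton_eq_bot] at htop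

theorem integrableOn_inner_mul_inner_mul_exp_neg_inner {s : Set E} (hs : MeasurableSet s)
    {M : E} {c : ℝ} (hc : 0 < c) (hM : ∀ f ∈ s, c * ‖f‖ ≤ ⟪f, M⟫) (u v : E) :
    IntegrableOn (fun f => ⟪f, u⟫ * ⟪f, v⟫ * Real.exp (-⟪f, M⟫)) s μ := by
  cases subsingleton_or_nontrivial E
  · simp [Subsingleton.elim u 0]
  refine (((integrable_norm_pow_mul_exp_neg_mul_norm μ 2 hc).const_mul (‖u‖ * ‖v‖)).restrict
    (s := s)).mono' (by fun_prop) ?_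
  filter_upwards [ae_restrict_mem hs] with f hf
  have hexp : Real.exp (-⟪f, M⟫) ≤ Real.exp (-c * ‖f‖) := by
    rw [Real.exp_le_exp, neg_mul]; exact neg_le_neg (hM f hf)
  rw [norm_mul, norm_mul, Real.norm_of_nonneg (Real.exp_pos _).le]
  calc ‖⟪f, u⟫‖ * ‖⟪f, v⟫‖ * Real.exp (-⟪f, M⟫)
      ≤ (‖f‖ * ‖u‖) * (‖f‖ * ‖v‖) * Real.exp (-c * ‖f‖) := by
        gcongr <;> exact norm_inner_le_norm _ _
    _ = ‖u‖ * ‖v‖ * (‖f‖ ^ 2 * Real.exp (-c * ‖f‖)) := by ring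

theorem setIntegral_inner_mul_self_mul_exp_neg_inner_pos {s : Set E} (hs : 0 < μ s) {u : E}
    (hu : u ≠ 0) {M : E}
    (hint : IntegrableOn (fun f => ⟪f, u⟫ * ⟪f, u⟫ * Real.exp (-⟪f, M⟫)) s μ) :
    0 < ∫ f in s, ⟪f, u⟫ * ⟪f, u⟫ * Real.exp (-⟪f, M⟫) ∂μ := by
  have hnonneg : 0 ≤ᵐ[μ.restrict s] fun f => ⟪f, u⟫ * ⟪f, u⟫ * Real.exp (-⟪f, M⟫) :=
    .of_forall fun f => mul_nonneg (mul_self_nonneg _) (Real.exp_pos _).le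
  rw [setIntegral_pos_iff_support_of_nonneg_ae hnonneg hint]
  have hsub : s \ {f | ⟪f, u⟫ = 0} ⊆
      Function.support (fun f => ⟪f, u⟫ * ⟪f, u⟫ * Real.exp (-⟪f, M⟫)) ∩ s :=
    fun f ⟨hfs, hf⟩ => ⟨(mul_pos (mul_self_pos.2 hf) (Real.exp_pos _)).ne', hfs⟩
  calc 0 < μ s := hs
    _ = μ (s \ {f | ⟪f, u⟫ = 0}) := (measure_sdiff_null (measure_inner_eq_zero μ hu)).symm
    _ ≤ _ := measure_mono hsub

end Integrals

/-- For a proper open convex cone `C ⊆ ℝ^{n+1}`, the Hessian of the characteristic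
function `φ_C(M) = ∫_{C*} e^{-f(M)} df` at any point `M ∈ C`, namely the bilinear form
`(u,v) ↦ ∫_{C*} f(u) f(v) e^{-f(M)} df`, is a positive definite symmetric bilinear
form. -/
theorem characteristic_function_hessian_posDef {n : ℕ}
    (C : Set (EuclideanSpace ℝ (Fin (n + 1))))
    (hopen : IsOpen C) (hconv : Convex ℝ C)
    (hcone : ∀ v ∈ C, ∀ r : ℝ, 0 < r → r • v ∈ C)
    (hline : ¬ ∃ a b : EuclideanSpace ℝ (Fin (n + 1)), b ≠ 0 ∧ ∀ t : ℝ, a + t • b ∈ C) :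
    ∀ M ∈ C,
      -- symmetry
      (∀ u v : EuclideanSpace ℝ (Fin (n + 1)),
        (∫ f in {f : EuclideanSpace ℝ (Fin (n + 1)) | ∀ w ∈ closure C, w ≠ 0 → 0 < ⟪f, w⟫},
          (⟪f, u⟫ * ⟪f, v⟫) * Real.exp (-⟪f, M⟫) ∂volume) =
        ∫ f in {f : EuclideanSpace ℝ (Fin (n + 1)) | ∀ w ∈ closure C, w ≠ 0 → 0 < ⟪f, w⟫},
          (⟪f, v⟫ * ⟪f, u⟫) * Real.exp (-⟪f, M⟫) ∂volume) ∧
      -- positive definiteness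
      (∀ u : EuclideanSpace ℝ (Fin (n + 1)), u ≠ 0 →
        0 < ∫ f in {f : EuclideanSpace ℝ (Fin (n + 1)) | ∀ w ∈ closure C, w ≠ 0 → 0 < ⟪f, w⟫},
          (⟪f, u⟫ * ⟪f, u⟫) * Real.exp (-⟪f, M⟫) ∂volume) := by
  intro M hM
  refine ⟨fun u v => by simp_rw [mul_comm ⟪_, u⟫], fun u hu => ?_⟩
  set D := {f : EuclideanSpace ℝ (Fin (n + 1)) | ∀ w ∈ closure C, w ≠ 0 → 0 < ⟪f, w⟫}
  have hD_subset : D ⊆ ProperCone.innerDual (closure C) := fun f hf =>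
    ProperCone.mem_innerDual.2 fun w hw => by
      rcases eq_or_ne w 0 with rfl | hw0
      · simp
      · rw [real_inner_comm]; exact (hf w hw hw0).le
  have hinterior_subset : interior (ProperCone.innerDual (closure C) : Set _) ⊆ D :=
    fun f hf w hw hw0 => by
      rw [real_inner_comm]; exact ProperCone.inner_pos_of_mem_interior_innerDual hf hw hw0
  obtain ⟨f₀, hf₀⟩ := (ConvexCone.ofConvex hconv hcone).nonempty_interior_innerDual_closure
    hopen ⟨M, hM⟩ hline
  obtain ⟨c, hc, hcM⟩ :=
    ProperCone.exists_mul_norm_le_inner_of_mem_interior (hopen.subset_interior_closure hM)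
  refine setIntegral_inner_mul_self_mul_exp_neg_inner_pos volume
    ((isOpen_interior.measure_pos volume ⟨f₀, hf₀⟩).trans_le (measure_mono hinterior_subset))
    hu ?_
  exact (integrableOn_inner_mul_inner_mul_exp_neg_inner volume
    (ProperCone.isClosed _).measurableSet hc hcM u u).mono_set hD_subset
end

section
/- A unipotent element γ ∈ SL₃(ℝ) with (γ − I)² = 0 and γ ≠ I (i.e. a matrix conjugate to a single Jordan block of size 2 plus a 1×1 block with eigenvalue 1) cannot preserve any properly convex open subset of ℙ²(ℝ). The same holds for an element whose square has this form. -/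
/-- `C` is the cone over a (nonempty) properly convex open subset `Ω` of `ℙ²(ℝ)`:
an open convex cone in `ℝ³` containing no affine line. -/
def IsProperConeR3 (C : Set (Fin 3 → ℝ)) : Prop :=
  IsOpen C ∧ Convex ℝ C ∧ C.Nonempty ∧
    (∀ v ∈ C, ∀ r : ℝ, 0 < r → r • v ∈ C) ∧
    ¬ ∃ a b : Fin 3 → ℝ, b ≠ 0 ∧ ∀ t : ℝ, a + t • b ∈ C

/-- `A` preserves the properly convex open set `Ω = P(C) ⊆ ℙ²(ℝ)`: its linear action
maps the cone `C` onto `C` or onto `-C`. -/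
def PreservesConeR3 (A : Matrix (Fin 3) (Fin 3) ℝ) (C : Set (Fin 3 → ℝ)) : Prop :=
  A.mulVecLin '' C = C ∨ A.mulVecLin '' C = (fun v => -v) '' C

/-!
Replacing `γ` by `γ²`, which preserves the cone `C` itself rather than up to sign, we may assume
`γ = 1 + N` with `N² = 0` and `N ≠ 0`. As `C` is open, some `v ∈ C` has `N v ≠ 0`, and
`γ ^ (±n) v = v ± n • N v ∈ C` for all `n : ℕ`. By convexity `C` then contains the whole affine
line `v + ℝ • N v`, which a properly convex cone cannot.
-/

open Set

section Ring

variable {R : Type*}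

theorem one_add_pow_of_sq_eq_zero [Semiring R] {N : R} (hN : N ^ 2 = 0) (n : ℕ) :
    (1 + N) ^ n = 1 + n * N := by
  induction n with
  | zero => simp
  | succ n ih =>
    rw [pow_succ, ih, Nat.cast_succ]
    calc (1 + n * N) * (1 + N) = 1 + (n + 1) * N + n * N ^ 2 := by noncomm_ring
      _ = 1 + (n + 1) * N := by rw [hN, mul_zero, add_zero]

theorem one_sub_mul_one_add_of_sq_eq_zero [Ring R] {N : R} (hN : N ^ 2 = 0) :
    (1 - N) * (1 + N) = 1 := by
  calc (1 - N) * (1 + N) = 1 - N ^ 2 := by noncomm_ring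
    _ = 1 := by rw [hN, sub_zero]

theorem sq_sub_one_sq_eq_zero_of_sub_one_sq_eq_zero [Ring R] {a : R} (h : (a - 1) ^ 2 = 0) :
    (a ^ 2 - 1) ^ 2 = 0 := by
  calc (a ^ 2 - 1) ^ 2 = (a - 1) ^ 2 * (a + 1) ^ 2 := by noncomm_ring
    _ = 0 := by rw [h, zero_mul]

theorem sq_ne_one_of_sub_one_sq_eq_zero [Ring R] [IsAddTorsionFree R] {a : R}
    (h : (a - 1) ^ 2 = 0) (ha : a ≠ 1) : a ^ 2 ≠ 1 := by
  intro ha2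
  have h2 : 2 • (1 - a) = 0 := by
    calc 2 • (1 - a) = (a ^ 2 - 1) + 2 • (1 - a) := by rw [ha2, sub_self, zero_add]
      _ = (a - 1) ^ 2 := by noncomm_ring
      _ = 0 := h
  exact ha (sub_eq_zero.mp ((smul_eq_zero.mp h2).resolve_left two_ne_zero)).symm

end Ring

section Module

variable {R M : Type*} [Ring R] [AddCommGroup M] [Module R M]

theorem Module.End.sq_image_eq_of_image_eq_or_image_eq_neg {f : Module.End R M} {s : Set M}
    (h : f '' s = s ∨ f '' s = -s) : ⇑(f ^ 2) '' s = s := by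
  rw [Module.End.coe_pow, Function.iterate_succ, Function.iterate_one, image_comp]
  rcases h with h | h <;> simp only [h, image_neg, neg_neg]

theorem Module.End.add_smul_mem_of_mapsTo_one_add {N : Module.End R M} (hN : N ^ 2 = 0)
    {s : Set M} (hs : MapsTo ⇑(1 + N) s s) {v : M} (hv : v ∈ s) (n : ℕ) :
    v + (n : R) • N v ∈ s := by
  have hpow : ((1 + N) ^ n) v ∈ s := (Module.End.pow_apply (1 + N) n v).symm ▸ hs.iterate n hv
  rwa [one_add_pow_of_sq_eq_zero hN, LinearMap.add_apply, Module.End.one_apply,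
    Module.End.mul_apply, Module.End.natCast_apply, ← Nat.cast_smul_eq_nsmul R] at hpow

end Module

theorem IsOpen.exists_apply_ne_zero {𝕜 E F : Type*} [NontriviallyNormedField 𝕜]
    [AddCommGroup E] [Module 𝕜 E] [TopologicalSpace E] [ContinuousAdd E] [ContinuousSMul 𝕜 E]
    [AddCommGroup F] [Module 𝕜 F] {s : Set E} (hs : IsOpen s) (hne : s.Nonempty)
    {f : E →ₗ[𝕜] F} (hf : f ≠ 0) : ∃ v ∈ s, f v ≠ 0 := by
  by_contra! h
  refine hf (LinearMap.ker_eq_top.mp ((LinearMap.ker f).eq_top_of_nonempty_interior' ?_))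
  exact hne.mono (hs.subset_interior_iff.mpr h)

section Convex

variable {E : Type*} [AddCommGroup E] [Module ℝ E] {s : Set E}

theorem Convex.add_smul_mem_of_forall_nat (hs : Convex ℝ s) {v w : E}
    (h : ∀ n : ℕ, v + (n : ℝ) • w ∈ s ∧ v - (n : ℝ) • w ∈ s) (t : ℝ) : v + t • w ∈ s := by
  have hline : ((fun t : ℝ ↦ v + t • w) ⁻¹' s).OrdConnected := by
    rw [← convex_iff_ordConnected]
    exact (hs.translate_preimage_right v).linear_preimage (LinearMap.toSpanSingleton ℝ E w)
  obtain ⟨n, hn⟩ := exists_nat_ge |t|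
  refine hline.out (x := -n) (y := n) ?_ (h n).1 ⟨?_, (le_abs_self t).trans hn⟩
  · simpa [neg_smul, ← sub_eq_add_neg] using (h n).2
  · linarith [neg_abs_le t]

theorem Convex.exists_line_subset_of_image_one_add_eq [TopologicalSpace E] [ContinuousAdd E]
    [ContinuousSMul ℝ E] (hconv : Convex ℝ s) (hopen : IsOpen s) (hne : s.Nonempty)
    {N : Module.End ℝ E} (hN : N ^ 2 = 0) (hN0 : N ≠ 0) (hs : ⇑(1 + N) '' s = s) :
    ∃ v w : E, w ≠ 0 ∧ ∀ t : ℝ, v + t • w ∈ s := by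
  obtain ⟨v, hv, hw⟩ := hopen.exists_apply_ne_zero hne hN0
  have hfwd : MapsTo ⇑(1 + N) s s := mapsTo_iff_image_subset.2 hs.subset
  have hbwd : MapsTo ⇑(1 + -N) s s := fun _ hy ↦ by
    obtain ⟨x, hx, rfl⟩ := hs.symm.subset hy
    rwa [← sub_eq_add_neg, ← Module.End.mul_apply, one_sub_mul_one_add_of_sq_eq_zero hN]
  refine ⟨v, N v, hw, hconv.add_smul_mem_of_forall_nat fun n ↦ ⟨?_, ?_⟩⟩
  · exact Module.End.add_smul_mem_of_mapsTo_one_add hN hfwd hv n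
  · simpa [sub_eq_add_neg] using
      Module.End.add_smul_mem_of_mapsTo_one_add (by rwa [neg_sq]) hbwd hv n

end Convex

theorem no_invariant_convex_of_quasi_unipotent_general (A : Matrix (Fin 3) (Fin 3) ℝ)
    (h : ((A - 1) ^ 2 = 0 ∧ A ≠ 1) ∨ ((A ^ 2 - 1) ^ 2 = 0 ∧ A ^ 2 ≠ 1)) :
    ¬ ∃ C : Set (Fin 3 → ℝ), IsProperConeR3 C ∧ PreservesConeR3 A C := by
  rintro ⟨C, ⟨hopen, hconv, hne, -, hnoline⟩, hpres⟩
  have : IsAddTorsionFree (Matrix (Fin 3) (Fin 3) ℝ) := IsAddTorsionFree.of_module_nnrat _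
  obtain ⟨hsq, hsq1⟩ : (A ^ 2 - 1) ^ 2 = 0 ∧ A ^ 2 ≠ 1 := h.elim
    (fun ⟨h1, hA⟩ ↦ ⟨sq_sub_one_sq_eq_zero_of_sub_one_sq_eq_zero h1,
      sq_ne_one_of_sub_one_sq_eq_zero h1 hA⟩) id
  let e := Matrix.toLinAlgEquiv' (R := ℝ) (n := Fin 3)
  have hN : e (A ^ 2 - 1) ^ 2 = 0 := by rw [← map_pow, hsq, map_zero]
  have hN0 : e (A ^ 2 - 1) ≠ 0 := (map_ne_zero_iff e e.injective).2 (sub_ne_zero.2 hsq1)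
  have hC : ⇑(1 + e (A ^ 2 - 1)) '' C = C := by
    rw [← map_one e, ← map_add, add_sub_cancel, map_pow]
    exact Module.End.sq_image_eq_of_image_eq_or_image_eq_neg (by rwa [← image_neg_eq_neg])
  exact hnoline (hconv.exists_line_subset_of_image_one_add_eq hopen hne hN hN0 hC)

/-- A unipotent element `γ ∈ SL₃(ℝ)` with `(γ - I)² = 0` and `γ ≠ I` (a single Jordan
block of size `2` plus a `1×1` block with eigenvalue `1`, up to conjugacy, with `u = 1`;
the case `u = -1` being that of an element whose square has this form) cannot preserve
any properly convex open subset of `ℙ²(ℝ)`. -/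
theorem no_invariant_convex_of_quasi_unipotent (A : Matrix (Fin 3) (Fin 3) ℝ)
    (hdet : A.det = 1)
    (h : ((A - 1) ^ 2 = 0 ∧ A ≠ 1) ∨ ((A ^ 2 - 1) ^ 2 = 0 ∧ A ^ 2 ≠ 1)) :
    ¬ ∃ C : Set (Fin 3 → ℝ), IsProperConeR3 C ∧ PreservesConeR3 A C :=
  no_invariant_convex_of_quasi_unipotent_general A h
end

section
/- Let γ ∈ SL₃(ℝ) be a planar element, i.e. conjugate to diag(α, α, β) with α, β > 0, α²β = 1, α ≠ 1, preserving a properly convex open set Ω ⊆ ℙ²(ℝ). Then Ω is a triangle: one of its vertices is the fixed point p_γ corresponding to eigenvalue β, and the side opposite to p_γ lies in the line of fixed points corresponding to eigenvalue α. -/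
/-!
Since `A` maps `C` onto `±C`, `A²` preserves `C`. In an eigenbasis of `A` write `ℝ³ = ℝ² × ℝ`;
then `A²` acts by `α²` on `ℝ²` and by `β² ≠ α²` on `ℝ`. Rescaling by `α⁻²`, each fibre
`{t | (u, t) ∈ C}` is an open interval invariant under `t ↦ (β/α)² t`, and it is not all of `ℝ`,
so it is one of the two open half-lines; by convexity it is the same half-line for every `u`.
Hence `C = K × (half-line)`, where `K` is a properly convex open cone in `ℝ²`. Finally such a
cone is spanned by its two boundary rays: a functional `g` positive on `K` and vanishing on one
boundary ray `z` slices `K` into a half-line `{x + t • z | l < t}`, because `K + z ⊆ K`.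
-/

open Set Filter Topology Pointwise Module Matrix

theorem zero_mem_uIcc_of_mul_nonpos {s t : ℝ} (h : s * t ≤ 0) : (0 : ℝ) ∈ uIcc s t := by
  rw [uIcc, mem_Icc, min_le_iff, le_max_iff]
  constructor <;> by_contra! h' <;> nlinarith

theorem Set.OrdConnected.mem_of_mul_pos {T : Set ℝ} (hT : T.OrdConnected) {q : ℝ} (hq : 1 < q)
    (hmul : ∀ t ∈ T, q * t ∈ T) (hdiv : ∀ t ∈ T, q⁻¹ * t ∈ T) {x t : ℝ} (hx : x ∈ T)
    (ht : 0 < t * x) : t ∈ T := by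
  have hpow : ∀ n : ℕ, q ^ n * x ∈ T ∧ (q ^ n)⁻¹ * x ∈ T := by
    intro n
    induction n with
    | zero => simpa using hx
    | succ n ih =>
      refine ⟨?_, ?_⟩
      · simpa [pow_succ, mul_comm, mul_left_comm, mul_assoc] using hmul _ ih.1
      · simpa [pow_succ, mul_comm, mul_left_comm, mul_assoc] using hdiv _ ih.2
  obtain ⟨n, hn⟩ := pow_unbounded_of_one_lt (max (t / x) (x / t)) hq
  have hqn : 0 < q ^ n := by positivity
  refine hT.uIcc_subset (hpow n).2 (hpow n).1 ?_
  have h1 : t / x < q ^ n := (le_max_left _ _).trans_lt hn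
  have h2 : x / t < q ^ n := (le_max_right _ _).trans_lt hn
  rw [mem_uIcc]
  rcases lt_or_gt_of_ne (left_ne_zero_of_mul ht.ne') with htn | htp
  · have hxn : x < 0 := by nlinarith
    rw [div_lt_iff_of_neg hxn] at h1
    rw [div_lt_iff_of_neg htn] at h2
    right
    constructor
    · linarith
    · rw [inv_mul_eq_div, le_div_iff₀ hqn]; linarith
  · have hxp : 0 < x := by nlinarith
    rw [div_lt_iff₀ hxp] at h1
    rw [div_lt_iff₀ htp] at h2
    left
    constructor
    · rw [inv_mul_eq_div, div_le_iff₀ hqn]; linarith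
    · linarith

theorem Set.OrdConnected.eq_setOf_mul_pos {T : Set ℝ} (hT : T.OrdConnected) (hTo : IsOpen T)
    (hTu : T ≠ univ) {q : ℝ} (hq0 : 0 < q) (hq1 : q ≠ 1)
    (hmul : ∀ t ∈ T, q * t ∈ T) (hdiv : ∀ t ∈ T, q⁻¹ * t ∈ T) {x : ℝ} (hx : x ∈ T) :
    T = {t | 0 < t * x} := by
  obtain ⟨r, hr, hrmul, hrdiv⟩ : ∃ r : ℝ, 1 < r ∧ (∀ t ∈ T, r * t ∈ T) ∧ ∀ t ∈ T, r⁻¹ * t ∈ T := by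
    rcases lt_or_gt_of_ne hq1 with h | h
    · exact ⟨q⁻¹, one_lt_inv₀ hq0 |>.2 h, hdiv, by simpa using hmul⟩
    · exact ⟨q, h, hmul, hdiv⟩
  have hzero : (0 : ℝ) ∉ T := by
    intro h0
    obtain ⟨ε, hε, hball⟩ := Metric.isOpen_iff.1 hTo 0 h0
    rw [Real.ball_eq_Ioo, zero_sub, zero_add] at hball
    refine hTu (eq_univ_of_forall fun t => ?_)
    rcases lt_trichotomy t 0 with ht | rfl | ht
    · exact hT.mem_of_mul_pos hr hrmul hrdiv (hball ⟨by linarith, by linarith⟩ : -(ε / 2) ∈ T)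
        (by nlinarith)
    · exact h0
    · exact hT.mem_of_mul_pos hr hrmul hrdiv (hball ⟨by linarith, by linarith⟩ : ε / 2 ∈ T)
        (by nlinarith)
  ext t
  refine ⟨fun ht => by_contra fun hneg => hzero (hT.uIcc_subset ht hx ?_),
    fun ht => hT.mem_of_mul_pos hr hrmul hrdiv hx ht⟩
  exact zero_mem_uIcc_of_mul_nonpos (not_lt.1 hneg)

variable {E F : Type*} [NormedAddCommGroup E] [NormedSpace ℝ E]
  [NormedAddCommGroup F] [NormedSpace ℝ F]

structure IsProperOpenCone (K : Set E) : Prop where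
  isOpen : IsOpen K
  convex : Convex ℝ K
  nonempty : K.Nonempty
  smul_mem : ∀ ⦃v⦄, v ∈ K → ∀ ⦃r : ℝ⦄, 0 < r → r • v ∈ K
  exists_add_smul_notMem : ∀ a b : E, b ≠ 0 → ∃ t : ℝ, a + t • b ∉ K

theorem IsProperConeR3.isProperOpenCone {C : Set (Fin 3 → ℝ)} (hC : IsProperConeR3 C) :
    IsProperOpenCone C := by
  obtain ⟨hopen, hconv, hne, hsmul, hline⟩ := hC
  refine ⟨hopen, hconv, hne, fun v hv r hr => hsmul v hv r hr, fun a b hb => ?_⟩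
  by_contra! h
  exact hline ⟨a, b, hb, h⟩

namespace IsProperOpenCone

section

variable {K : Set E} (hK : IsProperOpenCone K)
include hK

theorem add_mem {x y : E} (hx : x ∈ K) (hy : y ∈ K) : x + y ∈ K := by
  have hmid : (1 / 2 : ℝ) • x + (1 / 2 : ℝ) • y ∈ K :=
    hK.convex hx hy (by norm_num) (by norm_num) (by norm_num)
  convert hK.smul_mem hmid two_pos using 1
  module

theorem smul_mem_closure {z : E} (hz : z ∈ closure K) {r : ℝ} (hr : 0 < r) :
    r • z ∈ closure K :=
  map_mem_closure (continuous_const_smul r) hz fun _ hv => hK.smul_mem hv hr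

theorem add_mem_of_mem_closure {x y : E} (hx : x ∈ K) (hy : y ∈ closure K) : x + y ∈ K := by
  have : x + y ∈ K + closure K := add_mem_add hx hy
  rw [hK.isOpen.add_closure] at this
  obtain ⟨a, ha, b, hb, hab⟩ := this
  exact hab ▸ hK.add_mem ha hb

theorem zero_notMem [Nontrivial E] : (0 : E) ∉ K := by
  intro h0
  obtain ⟨b, hb⟩ := exists_ne (0 : E)
  obtain ⟨t, ht⟩ := hK.exists_add_smul_notMem 0 b hb
  have hsmall : ∀ᶠ r in 𝓝[>] (0 : ℝ), r • (t • b) ∈ K := by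
    have : Tendsto (fun r : ℝ => r • (t • b)) (𝓝 0) (𝓝 0) :=
      (continuous_id.smul continuous_const).tendsto' 0 0 (zero_smul _ _)
    exact (this.mono_left nhdsWithin_le_nhds) (hK.isOpen.mem_nhds h0)
  obtain ⟨r, hrK, hr⟩ := (hsmall.and self_mem_nhdsWithin).exists
  refine ht ?_
  have := hK.smul_mem hrK (inv_pos.2 hr)
  rwa [smul_smul, inv_mul_cancel₀ (ne_of_gt hr), one_smul, ← zero_add (t • b)] at this

theorem preimage (Φ : F ≃L[ℝ] E) : IsProperOpenCone (Φ ⁻¹' K) where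
  isOpen := hK.isOpen.preimage Φ.continuous
  convex := hK.convex.linear_preimage (Φ : F →ₗ[ℝ] E)
  nonempty := let ⟨x, hx⟩ := hK.nonempty; ⟨Φ.symm x, by simpa using hx⟩
  smul_mem v hv r hr := by simpa [mem_preimage, map_smul] using hK.smul_mem hv hr
  exists_add_smul_notMem a b hb := by
    simpa using hK.exists_add_smul_notMem (Φ a) (Φ b) (by simpa using hb)

theorem exists_dual_pos_of_mem_closure_of_notMem {z : E} (hz : z ∈ closure K) (hzK : z ∉ K) :
    ∃ g : StrongDual ℝ E, (∀ a ∈ K, 0 < g a) ∧ g z = 0 := by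
  obtain ⟨f, hf⟩ := geometric_hahn_banach_open_point hK.convex hK.isOpen hzK
  have hK0 : ∀ a ∈ K, f a ≤ 0 := by
    intro a ha
    by_contra! h
    have := hf _ (hK.smul_mem ha (r := (|f z| + 1) / f a) (by positivity))
    rw [map_smul, smul_eq_mul, div_mul_cancel₀ _ h.ne'] at this
    linarith [le_abs_self (f z)]
  have hz0 : f z ≤ 0 :=
    closure_minimal hK0 (isClosed_le f.continuous continuous_const) hz
  have hz0' : 0 ≤ f z := by
    by_contra! h
    obtain ⟨a, ha⟩ := hK.nonempty
    have hfa : f a < 0 := (hf a ha).trans h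
    have := hf _ (hK.smul_mem ha (r := f z / (2 * f a)) (div_pos_of_neg_of_neg h (by linarith)))
    rw [map_smul, smul_eq_mul, div_mul_eq_mul_div, mul_div_mul_right _ _ hfa.ne] at this
    linarith
  refine ⟨-f, fun a ha => ?_, by simp [le_antisymm hz0 hz0']⟩
  simpa [le_antisymm hz0 hz0'] using hf a ha

theorem exists_mem_closure_notMem_linearIndependent (hE : 1 < finrank ℝ E) :
    ∃ x ∈ K, ∃ z ∈ closure K, z ∉ K ∧ LinearIndependent ℝ ![x, z] := by
  have : Nontrivial E := Module.nontrivial_of_finrank_pos (zero_lt_one.trans hE)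
  obtain ⟨x, hx⟩ := hK.nonempty
  obtain ⟨d, hxd⟩ := exists_linearIndependent_pair_of_one_lt_finrank hE
    (ne_of_mem_of_not_mem hx hK.zero_notMem)
  have hline : Continuous fun s : ℝ => x + s • d := by fun_prop
  set S := {s : ℝ | x + s • d ∈ K}
  have hSo : IsOpen S := hK.isOpen.preimage hline
  have hS0 : (0 : ℝ) ∈ S := by simpa [S] using hx
  have hSu : S ≠ univ := by
    obtain ⟨t, ht⟩ := hK.exists_add_smul_notMem x d (by simpa using hxd.ne_zero 1)
    exact fun h => ht (h ▸ mem_univ t : t ∈ S)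
  obtain ⟨s, hsS, hs⟩ := (hSo.frontier_eq ▸ nonempty_frontier_iff.2 ⟨⟨0, hS0⟩, hSu⟩ :
    (closure S \ S).Nonempty)
  refine ⟨x, hx, x + s • d, map_mem_closure (f := fun s : ℝ => x + s • d) hline hsS fun _ h => h,
    hs, ?_⟩
  have hs0 : s ≠ 0 := fun h => hs (h ▸ hS0)
  rw [LinearIndependent.pair_iff] at hxd ⊢
  intro a b hab
  obtain ⟨h1, h2⟩ := hxd (a + b) (b * s) (by rw [← hab]; module)
  have hb : b = 0 := (mul_eq_zero.1 h2).resolve_right hs0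
  exact ⟨by linarith, hb⟩

theorem exists_forall_add_smul_mem_iff {x z : E} (hx : x ∈ K) (hz : z ∈ closure K)
    (hz0 : z ≠ 0) : ∃ l : ℝ, ∀ t : ℝ, x + t • z ∈ K ↔ l < t := by
  set T := {t : ℝ | x + t • z ∈ K}
  have hTo : IsOpen T := hK.isOpen.preimage (by fun_prop)
  have hup : ∀ t ∈ T, ∀ s, t < s → s ∈ T := by
    intro t ht s hts
    have := hK.add_mem_of_mem_closure ht (hK.smul_mem_closure hz (sub_pos.2 hts))
    simpa [T, add_assoc, ← add_smul] using this
  have hbdd : BddBelow T := by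
    by_contra h
    rw [not_bddBelow_iff] at h
    obtain ⟨t, ht⟩ := hK.exists_add_smul_notMem x z hz0
    obtain ⟨t', ht', hlt⟩ := h t
    exact ht (hup t' ht' t hlt)
  refine ⟨sInf T, fun t => ⟨fun ht => ?_, fun ht => ?_⟩⟩
  · obtain ⟨s, hst, hs⟩ := Filter.Eventually.exists_lt (hTo.mem_nhds ht : ∀ᶠ s in 𝓝 t, s ∈ T)
    exact (csInf_le hbdd hs).trans_lt hst
  · obtain ⟨s, hs, hst⟩ := exists_lt_of_csInf_lt ⟨0, by simpa [T] using hx⟩ ht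
    exact hup s hs t hst

theorem exists_linearIndependent_eq_of_finrank_eq_two (hE : finrank ℝ E = 2) :
    ∃ b₁ b₂ : E, LinearIndependent ℝ ![b₁, b₂] ∧
      K = {v | ∃ c₁ c₂ : ℝ, 0 < c₁ ∧ 0 < c₂ ∧ v = c₁ • b₁ + c₂ • b₂} := by
  obtain ⟨x, hx, z, hz, hzK, hxz⟩ := hK.exists_mem_closure_notMem_linearIndependent (by omega)
  obtain ⟨g, hgK, hgz⟩ := hK.exists_dual_pos_of_mem_closure_of_notMem hz hzK
  obtain ⟨l, hl⟩ := hK.exists_forall_add_smul_mem_iff hx hz (by simpa using hxz.ne_zero 1)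
  have hspan : ∀ v : E, ∃ p q : ℝ, p • x + q • z = v := by
    intro v
    have := hxz.span_eq_top_of_card_eq_finrank (by simp [hE])
    rw [Matrix.range_cons_cons_empty] at this
    exact Submodule.mem_span_pair.1 (this ▸ Submodule.mem_top)
  refine ⟨x + l • z, z, ?_, ?_⟩
  · rw [LinearIndependent.pair_iff] at hxz ⊢
    intro a b hab
    obtain ⟨ha, hb⟩ := hxz a (a * l + b) (by rw [← hab]; module)
    exact ⟨ha, by simpa [ha] using hb⟩
  ext v
  refine ⟨fun hv => ?_, ?_⟩
  · obtain ⟨p, q, rfl⟩ := hspan v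
    have hp : 0 < p := by
      have := hgK _ hv
      rw [map_add, map_smul, map_smul, hgz, smul_zero, add_zero, smul_eq_mul] at this
      exact pos_of_mul_pos_left this (hgK x hx).le
    have hlq : l < q / p := (hl _).1 <| by
      convert hK.smul_mem hv (inv_pos.2 hp) using 1
      match_scalars <;> field_simp
    refine ⟨p, q - p * l, hp, by rw [lt_div_iff₀ hp] at hlq; linarith, by module⟩
  · rintro ⟨c₁, c₂, hc₁, hc₂, rfl⟩
    convert hK.smul_mem ((hl (l + c₂ / c₁)).2 (by linarith [div_pos hc₂ hc₁])) hc₁ using 1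
    match_scalars <;> field_simp

end

variable {C : Set (E × ℝ)} (hC : IsProperOpenCone C)
include hC

theorem fiber_eq_of_image_eq {a c : ℝ} (ha : 0 < a) (hc : 0 < c) (hac : a ≠ c)
    (hinv : (fun p : E × ℝ => (a • p.1, c * p.2)) '' C = C) {p : E × ℝ} (hp : p ∈ C) :
    {t : ℝ | (p.1, t) ∈ C} = {t | 0 < t * p.2} := by
  have hmul : ∀ t, (p.1, t) ∈ C → (p.1, c / a * t) ∈ C := by
    intro t ht
    have := hC.smul_mem (hinv ▸ mem_image_of_mem _ ht) (inv_pos.2 ha)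
    convert this using 1
    ext
    · simp [inv_smul_smul₀ ha.ne']
    · simp only [smul_eq_mul, Prod.smul_mk]; field_simp
  have hdiv : ∀ t, (p.1, t) ∈ C → (p.1, (c / a)⁻¹ * t) ∈ C := by
    intro t ht
    obtain ⟨q, hq, hqt⟩ := hinv.symm ▸ ht
    obtain ⟨h1, h2⟩ := Prod.mk.inj hqt
    convert hC.smul_mem hq ha using 1
    rw [← h1, ← h2]
    ext
    · simp
    · simp only [smul_eq_mul, Prod.smul_snd]; field_simp
  have hconv : Convex ℝ {t : ℝ | (p.1, t) ∈ C} :=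
    hC.convex.affine_preimage ((AffineMap.const ℝ ℝ p.1).prod (AffineMap.id ℝ ℝ))
  refine hconv.ordConnected.eq_setOf_mul_pos
    (hC.isOpen.preimage (Continuous.prodMk_right p.1)) ?_ (div_pos hc ha)
    (by rwa [ne_eq, div_eq_one_iff_eq ha.ne', eq_comm]) hmul hdiv hp
  obtain ⟨t, ht⟩ := hC.exists_add_smul_notMem (p.1, 0) (0, 1) (by simp)
  exact fun h => ht (by simpa using (h ▸ mem_univ t : t ∈ {t : ℝ | (p.1, t) ∈ C}))

theorem exists_eq_setOf_mem_and_mul_pos {a c : ℝ} (ha : 0 < a) (hc : 0 < c) (hac : a ≠ c)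
    (hinv : (fun p : E × ℝ => (a • p.1, c * p.2)) '' C = C) :
    ∃ K : Set E, ∃ σ : ℝ, σ ≠ 0 ∧ IsProperOpenCone K ∧ C = {p | p.1 ∈ K ∧ 0 < p.2 * σ} := by
  have hfiber : ∀ p ∈ C, ∀ t, (p.1, t) ∈ C ↔ 0 < t * p.2 := fun p hp t =>
    Set.ext_iff.1 (hC.fiber_eq_of_image_eq ha hc hac hinv hp) t
  have hne : ∀ p ∈ C, p.2 ≠ 0 := fun p hp h => by simpa [h] using (hfiber p hp p.2).1 hp
  have hsign : ∀ p ∈ C, ∀ q ∈ C, 0 < p.2 * q.2 := by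
    intro p hp q hq
    by_contra! h
    have h0 : (0 : ℝ) ∈ Prod.snd '' C :=
      (hC.convex.linear_image (LinearMap.snd ℝ E ℝ)).ordConnected.uIcc_subset
        (mem_image_of_mem _ hp) (mem_image_of_mem _ hq) (zero_mem_uIcc_of_mul_nonpos h)
    obtain ⟨w, hw, hw0⟩ := h0
    exact hne w hw hw0
  obtain ⟨p₀, hp₀⟩ := hC.nonempty
  have hmem : ∀ u t, (u, t) ∈ C ↔ (u, p₀.2) ∈ C ∧ 0 < t * p₀.2 := by
    intro u t
    refine ⟨fun h => ⟨?_, hsign _ h _ hp₀⟩, fun h => (hfiber _ h.1 t).2 h.2⟩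
    exact (hfiber _ h _).2 (by rw [mul_comm]; exact hsign _ h _ hp₀)
  have hconv : Convex ℝ {u : E | (u, p₀.2) ∈ C} :=
    hC.convex.affine_preimage ((AffineMap.id ℝ E).prod (AffineMap.const ℝ E p₀.2))
  refine ⟨{u | (u, p₀.2) ∈ C}, p₀.2, hne _ hp₀, ?_, ?_⟩
  · refine ⟨hC.isOpen.preimage (Continuous.prodMk_left _), hconv, ⟨p₀.1, hp₀⟩,
      fun u hu r hr => ((hmem _ _).1 (hC.smul_mem hu hr)).1, fun u d hd => ?_⟩
    obtain ⟨t, ht⟩ := hC.exists_add_smul_notMem (u, p₀.2) (d, 0) (by simpa using hd)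
    exact ⟨t, by simpa using ht⟩
  · ext ⟨u, t⟩
    exact hmem u t

theorem exists_linearIndependent_eq_of_image_eq (hE : finrank ℝ E = 2) {a c : ℝ} (ha : 0 < a)
    (hc : 0 < c) (hac : a ≠ c) (hinv : (fun p : E × ℝ => (a • p.1, c * p.2)) '' C = C) :
    ∃ (b₁ b₂ : E) (σ : ℝ), LinearIndependent ℝ ![(b₁, 0), (b₂, 0), ((0 : E), σ)] ∧
      C = {v | ∃ c₁ c₂ c₃ : ℝ, 0 < c₁ ∧ 0 < c₂ ∧ 0 < c₃ ∧
        v = c₁ • (b₁, 0) + c₂ • (b₂, 0) + c₃ • ((0 : E), σ)} := by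
  obtain ⟨K, σ, hσ, hK, rfl⟩ := hC.exists_eq_setOf_mem_and_mul_pos ha hc hac hinv
  obtain ⟨b₁, b₂, hb, rfl⟩ := hK.exists_linearIndependent_eq_of_finrank_eq_two hE
  refine ⟨b₁, b₂, σ, ?_, ?_⟩
  · rw [Fintype.linearIndependent_iff]
    intro g hg
    simp only [Fin.sum_univ_three, Matrix.cons_val_zero, Matrix.cons_val_one, Matrix.cons_val_two,
      Matrix.head_cons, Matrix.tail_cons, Prod.smul_mk, smul_zero, smul_eq_mul, mul_zero,
      Prod.mk_add_mk, add_zero, zero_add, Prod.mk_eq_zero] at hg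
    obtain ⟨h₀, h₁⟩ := LinearIndependent.pair_iff.1 hb _ _ hg.1
    have h₂ : g 2 = 0 := (mul_eq_zero.1 hg.2).resolve_right hσ
    intro i
    fin_cases i <;> assumption
  · ext ⟨u, t⟩
    simp only [mem_ofPred_eq, Prod.smul_mk, smul_zero, smul_eq_mul, mul_zero, Prod.mk_add_mk,
      add_zero, zero_add, Prod.mk.injEq]
    constructor
    · rintro ⟨⟨c₁, c₂, hc₁, hc₂, rfl⟩, ht⟩
      exact ⟨c₁, c₂, t / σ, hc₁, hc₂, by rwa [div_pos_iff, ← mul_pos_iff], rfl,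
        (div_mul_cancel₀ t hσ).symm⟩
    · rintro ⟨c₁, c₂, c₃, hc₁, hc₂, hc₃, rfl, rfl⟩
      exact ⟨⟨c₁, c₂, hc₁, hc₂, rfl⟩, by rw [mul_assoc]; exact mul_pos hc₃ (mul_self_pos.2 hσ)⟩

end IsProperOpenCone

def Fin.snocLinearEquiv (R M : Type*) [Semiring R] [AddCommMonoid M] [Module R M] (n : ℕ) :
    ((Fin n → M) × M) ≃ₗ[R] (Fin (n + 1) → M) where
  toFun p := Fin.snoc p.1 p.2
  invFun v := (Fin.init v, v (Fin.last n))
  map_add' p q := by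
    ext i
    refine Fin.lastCases ?_ (fun j => ?_) i <;> simp
  map_smul' r p := by
    ext i
    refine Fin.lastCases ?_ (fun j => ?_) i <;> simp
  left_inv p := by simp
  right_inv v := by simp

theorem Matrix.diagonal_mulVec_snoc (α β : ℝ) (u : Fin 2 → ℝ) (s : ℝ) :
    diagonal ![α, α, β] *ᵥ Fin.snoc u s = Fin.snoc (α • u) (β * s) := by
  ext i
  fin_cases i <;> simp [mulVec_diagonal, Fin.snoc]

theorem exists_continuousLinearEquiv_mulVec_eq {A P : Matrix (Fin 3) (Fin 3) ℝ} {α β : ℝ}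
    (hP : IsUnit P.det) (hA : A = P * diagonal ![α, α, β] * P⁻¹) :
    ∃ Φ : ((Fin 2 → ℝ) × ℝ) ≃L[ℝ] (Fin 3 → ℝ), ∀ p, A *ᵥ Φ p = Φ (α • p.1, β * p.2) := by
  refine ⟨((Fin.snocLinearEquiv ℝ ℝ 2).trans
    (P.toLinearEquiv' (P.invertibleOfIsUnitDet hP))).toContinuousLinearEquiv, fun p => ?_⟩
  show A *ᵥ (P *ᵥ Fin.snoc p.1 p.2) = P *ᵥ Fin.snoc (α • p.1) (β * p.2)
  rw [mulVec_mulVec, ← diagonal_mulVec_snoc, mulVec_mulVec, hA, Matrix.mul_assoc _ P⁻¹,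
    nonsing_inv_mul P hP, Matrix.mul_one]

theorem PreservesConeR3.image_mul_self {A : Matrix (Fin 3) (Fin 3) ℝ} {C : Set (Fin 3 → ℝ)}
    (h : PreservesConeR3 A C) : (A * A).mulVec '' C = C := by
  have hneg : ∀ S : Set (Fin 3 → ℝ),
      A.mulVec '' ((fun v => -v) '' S) = (fun v => -v) '' (A.mulVec '' S) := by
    intro S
    simp only [image_image, mulVec_neg]
  rw [show (A * A).mulVec = A.mulVec ∘ A.mulVec from funext fun v => (mulVec_mulVec v A A).symm,
    image_comp]
  rcases h with h | h <;> rw [coe_mulVecLin] at h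
  · rw [h, h]
  · rw [h, hneg, h, image_image]
    simp

theorem PreservesConeR3.image_preimage_eq {A : Matrix (Fin 3) (Fin 3) ℝ} {C : Set (Fin 3 → ℝ)}
    (h : PreservesConeR3 A C) {α β : ℝ} (Φ : (E × ℝ) ≃L[ℝ] (Fin 3 → ℝ))
    (hΦ : ∀ p, A *ᵥ Φ p = Φ (α • p.1, β * p.2)) :
    (fun p : E × ℝ => ((α * α) • p.1, (β * β) * p.2)) '' (Φ ⁻¹' C) = Φ ⁻¹' C := by
  have hsemi : Function.Semiconj Φ.symm (A * A).mulVec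
      (fun p => ((α * α) • p.1, (β * β) * p.2)) := by
    intro v
    obtain ⟨p, rfl⟩ := Φ.surjective v
    simp [← mulVec_mulVec, hΦ, smul_smul, mul_assoc]
  rw [← Φ.image_symm_eq_preimage, ← hsemi.set_image, h.image_mul_self]

theorem planar_implies_triangle_general (A : Matrix (Fin 3) (Fin 3) ℝ)
    (α β : ℝ) (hα : 0 < α) (hβ : 0 < β) (hαβ : α ^ 2 * β = 1) (hα1 : α ≠ 1)
    (hconj : ∃ P : Matrix (Fin 3) (Fin 3) ℝ, IsUnit P.det ∧
      A = P * Matrix.diagonal ![α, α, β] * P⁻¹)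
    (C : Set (Fin 3 → ℝ)) (hC : IsProperConeR3 C) (hpres : PreservesConeR3 A C) :
    ∃ b₁ b₂ b₃ : Fin 3 → ℝ,
      LinearIndependent ℝ ![b₁, b₂, b₃] ∧
      C = {v | ∃ c₁ c₂ c₃ : ℝ, 0 < c₁ ∧ 0 < c₂ ∧ 0 < c₃ ∧
        v = c₁ • b₁ + c₂ • b₂ + c₃ • b₃} ∧
      A.mulVec b₃ = β • b₃ ∧ A.mulVec b₁ = α • b₁ ∧ A.mulVec b₂ = α • b₂ := by
  obtain ⟨P, hP, hA⟩ := hconj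
  obtain ⟨Φ, hΦ⟩ := exists_continuousLinearEquiv_mulVec_eq hP hA
  have hαβ' : α * α ≠ β * β := by
    intro h
    have hab : α = β := by nlinarith
    exact hα1 ((pow_eq_one_iff_of_nonneg hα.le three_ne_zero).1 (by rw [← hαβ, ← hab]; ring))
  obtain ⟨b₁, b₂, σ, hli, hCΦ⟩ :=
    (hC.isProperOpenCone.preimage Φ).exists_linearIndependent_eq_of_image_eq (by simp)
      (by positivity) (by positivity) hαβ' (hpres.image_preimage_eq Φ hΦ)
  refine ⟨Φ (b₁, 0), Φ (b₂, 0), Φ (0, σ), ?_, ?_, ?_, ?_, ?_⟩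
  · have hcomp : Φ ∘ ![(b₁, 0), (b₂, 0), (0, σ)] = ![Φ (b₁, 0), Φ (b₂, 0), Φ (0, σ)] := by
      ext i : 1
      fin_cases i <;> rfl
    exact hcomp ▸ hli.map' Φ.toLinearEquiv.toLinearMap Φ.toLinearEquiv.ker
  · ext v
    rw [show v ∈ C ↔ Φ.symm v ∈ Φ ⁻¹' C by simp, hCΦ]
    simp only [mem_ofPred_eq, Φ.symm_apply_eq, map_add, map_smul]
  all_goals rw [hΦ, ← map_smul]; simp

/-- Let `γ ∈ SL₃(ℝ)` be a planar element (conjugate to `diag(α, α, β)` with `α, β > 0`,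
`α²β = 1`, `α ≠ 1`) preserving a properly convex open set `Ω = P(C) ⊆ ℙ²(ℝ)`.  Then `Ω`
is a triangle (the cone `C` is a simplicial cone over a basis `b₁, b₂, b₃`), one of whose
vertices is the fixed point `p_γ` corresponding to the eigenvalue `β` (the generator `b₃`
is a `β`-eigenvector), and whose side opposite to `p_γ` lies in the line `D_γ` of fixed
points corresponding to `α` (the generators `b₁, b₂` are `α`-eigenvectors). -/
theorem planar_implies_triangle (A : Matrix (Fin 3) (Fin 3) ℝ) (hdet : A.det = 1)
    (α β : ℝ) (hα : 0 < α) (hβ : 0 < β) (hαβ : α ^ 2 * β = 1) (hα1 : α ≠ 1)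
    (hconj : ∃ P : Matrix (Fin 3) (Fin 3) ℝ, IsUnit P.det ∧
      A = P * Matrix.diagonal ![α, α, β] * P⁻¹)
    (C : Set (Fin 3 → ℝ)) (hC : IsProperConeR3 C) (hpres : PreservesConeR3 A C) :
    ∃ b₁ b₂ b₃ : Fin 3 → ℝ,
      LinearIndependent ℝ ![b₁, b₂, b₃] ∧
      C = {v | ∃ c₁ c₂ c₃ : ℝ, 0 < c₁ ∧ 0 < c₂ ∧ 0 < c₃ ∧
        v = c₁ • b₁ + c₂ • b₂ + c₃ • b₃} ∧
      A.mulVec b₃ = β • b₃ ∧ A.mulVec b₁ = α • b₁ ∧ A.mulVec b₂ = α • b₂ :=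
  planar_implies_triangle_general A α β hα hβ hαβ hα1 hconj C hC hpres
end

section
/- Let Ω₀ = {(x,y) ∈ ℝ² : x > 0, y > 0} be the positive quadrant viewed as a properly convex open subset of ℙ²(ℝ). Every 'pic' of Ω₀ whose vertex at infinity is the origin — i.e. every open triangle contained in Ω₀ having exactly one vertex at (0,0) ∈ ∂Ω₀ — has infinite Busemann volume μ_{Ω₀}. -/
open MeasureTheory

noncomputable section

/-- Parameter of the intersection point `p⁺` of the half-line from `x` in direction `v`
with `∂Ω`. -/
def tPlus (Ω : Set (EuclideanSpace ℝ (Fin 2))) (x v : EuclideanSpace ℝ (Fin 2)) : ℝ :=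
  sSup {t : ℝ | x + t • v ∈ Ω}

/-- Parameter of the intersection point `p⁻` of the half-line from `x` in direction `-v`
with `∂Ω`. -/
def tMinus (Ω : Set (EuclideanSpace ℝ (Fin 2))) (x v : EuclideanSpace ℝ (Fin 2)) : ℝ :=
  sInf {t : ℝ | x + t • v ∈ Ω}

/-- The Hilbert–Finsler norm `‖v‖ₓ = (1/‖x - p⁻‖ + 1/‖x - p⁺‖)·‖v‖`. -/
def finslerNorm (Ω : Set (EuclideanSpace ℝ (Fin 2))) (x v : EuclideanSpace ℝ (Fin 2)) : ℝ :=
  (1 / ‖x - (x + tMinus Ω x v • v)‖ + 1 / ‖x - (x + tPlus Ω x v • v)‖) * ‖v‖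

/-- The unit ball `B_x(1)` of the Hilbert–Finsler norm at `x`. -/
def finslerBall (Ω : Set (EuclideanSpace ℝ (Fin 2))) (x : EuclideanSpace ℝ (Fin 2)) :
    Set (EuclideanSpace ℝ (Fin 2)) :=
  {v | finslerNorm Ω x v < 1}

/-- The Lebesgue measure normalized so that the Euclidean unit ball has volume `1`. -/
def nVol (s : Set (EuclideanSpace ℝ (Fin 2))) : ENNReal :=
  volume s / volume {v : EuclideanSpace ℝ (Fin 2) | ‖v‖ < 1}

/-- The Busemann measure of `A ⊆ Ω`:  `μ_Ω(A) = ∫_A dVol(x) / Vol(B_x(1))`, where `Vol`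
is the normalized Lebesgue measure. -/
def busemann (Ω A : Set (EuclideanSpace ℝ (Fin 2))) : ENNReal :=
  ∫⁻ x in A, (nVol (finslerBall Ω x))⁻¹
    ∂((volume {v : EuclideanSpace ℝ (Fin 2) | ‖v‖ < 1})⁻¹ • volume)

end

/-! For `x` in the quadrant, convexity forces the Finsler norm of `v` to be at least `1` as soon
as `x + v` or `x - v` leaves the quadrant, so the Finsler unit ball at `x` lies in the box
`|vᵢ| < xᵢ`, hence in the Euclidean ball of radius `‖x‖`. The Busemann density is therefore at
least `1 / ‖x‖²`, a density invariant under the homothety `x ↦ x / 2`. This homothety maps the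
triangle into itself, and the images of a small ball in the triangle are pairwise disjoint balls
of the same `‖x‖⁻²`-mass, so the volume is infinite. -/

open Metric Set Module
open scoped Pointwise

local notation "ℝ²" => EuclideanSpace ℝ (Fin 2)

lemma norm_sub_add_smul {E : Type*} [SeminormedAddCommGroup E] [NormedSpace ℝ E] (x v : E)
    (t : ℝ) : ‖x - (x + t • v)‖ = |t| * ‖v‖ := by
  rw [sub_add_cancel_left, norm_neg, norm_smul, Real.norm_eq_abs]

section Finsler

variable {Ω : Set ℝ²} {x v : ℝ²}

lemma finslerNorm_eq (hv : v ≠ 0) :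
    finslerNorm Ω x v = |tMinus Ω x v|⁻¹ + |tPlus Ω x v|⁻¹ := by
  have := norm_ne_zero_iff.2 hv
  simp only [finslerNorm, norm_sub_add_smul]
  field_simp

lemma tPlus_neg (Ω : Set ℝ²) (x v : ℝ²) : tPlus Ω x (-v) = -tMinus Ω x v := by
  have : {t : ℝ | x + t • -v ∈ Ω} = -{t | x + t • v ∈ Ω} := by
    ext t; simp [smul_neg, neg_smul]
  rw [tPlus, this, Real.sSup_neg, tMinus]

lemma tMinus_neg (Ω : Set ℝ²) (x v : ℝ²) : tMinus Ω x (-v) = -tPlus Ω x v := by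
  rw [← neg_neg v, tPlus_neg, neg_neg, neg_neg]

lemma finslerNorm_neg (Ω : Set ℝ²) (x v : ℝ²) : finslerNorm Ω x (-v) = finslerNorm Ω x v := by
  simp only [finslerNorm, norm_sub_add_smul, tPlus_neg, tMinus_neg, abs_neg, norm_neg]
  ring

lemma le_one_of_add_smul_mem (hΩ : Convex ℝ Ω) (hx : x ∈ Ω) (hv : x + v ∉ Ω) {t : ℝ}
    (ht : x + t • v ∈ Ω) : t ≤ 1 := by
  by_contra! h
  refine hv ?_
  have := hΩ.add_smul_mem hx ht (t := t⁻¹) ⟨by positivity, inv_le_one_of_one_le₀ h.le⟩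
  rwa [smul_smul, inv_mul_cancel₀ (by positivity), one_smul] at this

lemma one_le_finslerNorm (hΩo : IsOpen Ω) (hΩ : Convex ℝ Ω) (hx : x ∈ Ω) (hv : x + v ∉ Ω) :
    1 ≤ finslerNorm Ω x v := by
  have hv0 : v ≠ 0 := by rintro rfl; simp_all
  have hle : ∀ t ∈ {t : ℝ | x + t • v ∈ Ω}, t ≤ 1 := fun t => le_one_of_add_smul_mem hΩ hx hv
  have hopen : IsOpen {t : ℝ | x + t • v ∈ Ω} := hΩo.preimage (by fun_prop)
  obtain ⟨ε, hε, hεΩ⟩ :=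
    Filter.Eventually.exists_gt (hopen.mem_nhds (x := (0 : ℝ)) (by simpa using hx))
  have hpos : 0 < tPlus Ω x v := hε.trans_le (le_csSup ⟨1, hle⟩ hεΩ)
  rw [finslerNorm_eq hv0, abs_of_pos hpos]
  exact le_add_of_nonneg_of_le (by positivity) ((one_le_inv₀ hpos).2 (Real.sSup_le hle zero_le_one))

lemma finslerBall_subset (hΩo : IsOpen Ω) (hΩ : Convex ℝ Ω) (hx : x ∈ Ω) :
    finslerBall Ω x ⊆ {v | x + v ∈ Ω ∧ x - v ∈ Ω} := by
  intro v (hv : finslerNorm Ω x v < 1)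
  refine ⟨not_not.1 fun h => ?_, not_not.1 fun h => ?_⟩
  · exact (one_le_finslerNorm hΩo hΩ hx h).not_gt hv
  · rw [sub_eq_add_neg] at h
    exact (one_le_finslerNorm hΩo hΩ hx h).not_gt ((finslerNorm_neg Ω x v).trans_lt hv)

end Finsler

def quadrant : Set ℝ² := {p | 0 < p 0 ∧ 0 < p 1}

lemma isOpen_quadrant : IsOpen quadrant :=
  (isOpen_lt continuous_const (EuclideanSpace.proj 0).continuous).inter
    (isOpen_lt continuous_const (EuclideanSpace.proj 1).continuous)

lemma convex_quadrant : Convex ℝ quadrant :=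
  (convex_halfSpace_gt (EuclideanSpace.proj 0).isLinear 0).inter
    (convex_halfSpace_gt (EuclideanSpace.proj 1).isLinear 0)

lemma zero_mem_closure_quadrant : (0 : ℝ²) ∈ closure quadrant := by
  have hlim : Filter.Tendsto (fun t : ℝ => t • (!₂[1, 1] : ℝ²)) (nhdsWithin 0 (Ioi 0)) (nhds 0) :=
    ((continuous_id.smul continuous_const).tendsto' 0 0 (zero_smul ℝ _)).mono_left
      nhdsWithin_le_nhds
  exact mem_closure_of_tendsto hlim
    (eventually_nhdsWithin_of_forall fun t (ht : 0 < t) => by simp [quadrant, ht])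

lemma norm_lt_of_add_mem_quadrant_of_sub_mem_quadrant {x v : ℝ²} (h₁ : x + v ∈ quadrant)
    (h₂ : x - v ∈ quadrant) : ‖v‖ < ‖x‖ := by
  obtain ⟨h₁₀, h₁₁⟩ := h₁
  obtain ⟨h₂₀, h₂₁⟩ := h₂
  simp only [PiLp.add_apply, PiLp.sub_apply] at h₁₀ h₁₁ h₂₀ h₂₁
  rw [← sq_lt_sq₀ (norm_nonneg _) (norm_nonneg _), EuclideanSpace.real_norm_sq_eq,
    EuclideanSpace.real_norm_sq_eq, Fin.sum_univ_two, Fin.sum_univ_two]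
  nlinarith

lemma finslerBall_quadrant_subset_ball {x : ℝ²} (hx : x ∈ quadrant) :
    finslerBall quadrant x ⊆ ball 0 ‖x‖ := fun _ hv =>
  have h := finslerBall_subset isOpen_quadrant convex_quadrant hx hv
  mem_ball_zero_iff.2 (norm_lt_of_add_mem_quadrant_of_sub_mem_quadrant h.1 h.2)

lemma nVol_ball (c : ℝ²) {r : ℝ} (hr : 0 ≤ r) : nVol (ball c r) = ENNReal.ofReal (r ^ 2) := by
  rw [nVol, ← ball_zero_eq, Measure.addHaar_ball volume c hr, finrank_euclideanSpace_fin,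
    ENNReal.mul_div_cancel_right (measure_ball_pos _ _ one_pos).ne' measure_ball_lt_top.ne]

lemma inv_ofReal_norm_sq_le_inv_nVol_finslerBall {x : ℝ²} (hx : x ∈ quadrant) :
    (ENNReal.ofReal (‖x‖ ^ 2))⁻¹ ≤ (nVol (finslerBall quadrant x))⁻¹ := by
  rw [ENNReal.inv_le_inv, ← nVol_ball 0 (norm_nonneg x)]
  exact ENNReal.div_le_div_right (measure_mono (finslerBall_quadrant_subset_ball hx)) _

lemma busemann_quadrant_eq_top {A : Set ℝ²} (hA : MeasurableSet A) (hAQ : A ⊆ quadrant)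
    (h : ∫⁻ x in A, (ENNReal.ofReal (‖x‖ ^ 2))⁻¹ = ⊤) : busemann quadrant A = ⊤ := by
  rw [busemann, ← ball_zero_eq, Measure.restrict_smul, lintegral_smul_measure, smul_eq_mul]
  refine top_unique ?_
  calc ⊤ = (volume (ball (0 : ℝ²) 1))⁻¹ * ∫⁻ x in A, (ENNReal.ofReal (‖x‖ ^ 2))⁻¹ := by
        rw [h, ENNReal.mul_top (ENNReal.inv_ne_zero.2 measure_ball_lt_top.ne)]
    _ ≤ _ := mul_le_mul_right
        (setLIntegral_mono' hA fun x hx => inv_ofReal_norm_sq_le_inv_nVol_finslerBall (hAQ hx)) _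

section HomogeneousDensity

variable {E : Type*} [NormedAddCommGroup E] [NormedSpace ℝ E]

lemma disjoint_ball_smul_ball_smul {q : E} {r s t : ℝ} (ht : 0 ≤ t) (hts : t ≤ s / 2)
    (hr : 3 * r ≤ ‖q‖) : Disjoint (ball (s • q) (s * r)) (ball (t • q) (t * r)) := by
  have hs : 0 ≤ s := by linarith
  refine Set.disjoint_left.2 fun x hxs hxt => ?_
  have h₁ := norm_lt_of_mem_ball (mem_ball_comm.1 hxs)
  have h₂ := norm_lt_of_mem_ball hxt
  rw [norm_smul, Real.norm_of_nonneg hs] at h₁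
  rw [norm_smul, Real.norm_of_nonneg ht] at h₂
  have hqr : 0 ≤ ‖q‖ + r := by nlinarith [norm_nonneg x]
  nlinarith [mul_le_mul_of_nonneg_right hts hqr, mul_le_mul_of_nonneg_left hr hs]

variable [FiniteDimensional ℝ E] [MeasurableSpace E] [BorelSpace E] (μ : Measure E)
  [μ.IsAddHaarMeasure]

lemma le_setLIntegral_inv_norm_pow_ball_smul [Nontrivial E] (q : E) {r s : ℝ} (hr : 0 < r)
    (hs : 0 < s) :
    ENNReal.ofReal ((r / (‖q‖ + r)) ^ finrank ℝ E) * μ (ball 0 1) ≤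
      ∫⁻ x in ball (s • q) (s * r), (ENNReal.ofReal (‖x‖ ^ finrank ℝ E))⁻¹ ∂μ := by
  set d := finrank ℝ E
  have hsq : 0 < s * (‖q‖ + r) := by positivity
  have hbound : ∀ x ∈ ball (s • q) (s * r),
      ENNReal.ofReal ((s * (‖q‖ + r)) ^ d)⁻¹ ≤ (ENNReal.ofReal (‖x‖ ^ d))⁻¹ := by
    intro x hx
    have hx' : ‖x‖ < s * (‖q‖ + r) := by
      simpa [norm_smul, Real.norm_of_nonneg hs.le, mul_add] using norm_lt_of_mem_ball hx
    rw [ENNReal.ofReal_inv_of_pos (pow_pos hsq d)]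
    exact ENNReal.inv_le_inv.2
      (ENNReal.ofReal_le_ofReal (pow_le_pow_left₀ (norm_nonneg x) hx'.le d))
  have hscale : (r / (‖q‖ + r)) ^ d = ((s * (‖q‖ + r)) ^ d)⁻¹ * (s * r) ^ d := by
    rw [div_pow, mul_pow, mul_pow]
    field_simp
  calc ENNReal.ofReal ((r / (‖q‖ + r)) ^ d) * μ (ball 0 1)
      = ENNReal.ofReal ((s * (‖q‖ + r)) ^ d)⁻¹ * μ (ball (s • q) (s * r)) := by
        rw [hscale, ENNReal.ofReal_mul (by positivity), mul_assoc,
          ← Measure.addHaar_ball μ _ (by positivity)]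
    _ = ∫⁻ _ in ball (s • q) (s * r), ENNReal.ofReal ((s * (‖q‖ + r)) ^ d)⁻¹ ∂μ :=
        (setLIntegral_const _ _).symm
    _ ≤ _ := setLIntegral_mono' measurableSet_ball hbound

theorem lintegral_inv_norm_pow_finrank_eq_top {U : Set E} (hU : IsOpen U)
    (hhalf : MapsTo ((2⁻¹ : ℝ) • ·) U U) {q : E} (hq : q ∈ U) (hq0 : q ≠ 0) :
    ∫⁻ x in U, (ENNReal.ofReal (‖x‖ ^ finrank ℝ E))⁻¹ ∂μ = ⊤ := by
  have : Nontrivial E := nontrivial_of_ne q 0 hq0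
  obtain ⟨r₀, hr₀, hballU⟩ := Metric.isOpen_iff.1 hU q hq
  set r := min r₀ (‖q‖ / 3)
  have hr : 0 < r := lt_min hr₀ (by positivity)
  set D : ℕ → Set E := fun n => ball ((2⁻¹ : ℝ) ^ n • q) ((2⁻¹ : ℝ) ^ n * r)
  have hDU : ∀ n, D n ⊆ U := by
    intro n
    have hD : D n = ((2⁻¹ : ℝ) ^ n) • ball q r := by
      rw [_root_.smul_ball (by positivity), Real.norm_of_nonneg (by positivity)]
    rw [hD]
    rintro _ ⟨y, hy, rfl⟩
    simpa [smul_iterate] using hhalf.iterate n (hballU (ball_subset_ball (min_le_left _ _) hy))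
  have hD : Pairwise (Function.onFun Disjoint D) := by
    refine (pairwise_disjoint_on D).2 fun m n hmn => ?_
    refine disjoint_ball_smul_ball_smul (by positivity) ?_
      (by linarith [min_le_right r₀ (‖q‖ / 3)])
    calc (2⁻¹ : ℝ) ^ n ≤ 2⁻¹ ^ (m + 1) := pow_le_pow_of_le_one (by norm_num) (by norm_num) hmn
      _ = 2⁻¹ ^ m / 2 := by ring
  have hc : ENNReal.ofReal ((r / (‖q‖ + r)) ^ finrank ℝ E) * μ (ball 0 1) ≠ 0 :=
    mul_ne_zero (ENNReal.ofReal_pos.2 (by positivity)).ne' (measure_ball_pos μ 0 one_pos).ne'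
  refine top_unique ?_
  calc ⊤ = ∑' _ : ℕ, ENNReal.ofReal ((r / (‖q‖ + r)) ^ finrank ℝ E) * μ (ball 0 1) :=
        (ENNReal.tsum_const_eq_top_of_ne_zero hc).symm
    _ ≤ ∑' n, ∫⁻ x in D n, (ENNReal.ofReal (‖x‖ ^ finrank ℝ E))⁻¹ ∂μ :=
        ENNReal.tsum_le_tsum fun n => le_setLIntegral_inv_norm_pow_ball_smul μ q hr (by positivity)
    _ = ∫⁻ x in ⋃ n, D n, (ENNReal.ofReal (‖x‖ ^ finrank ℝ E))⁻¹ ∂μ :=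
        (lintegral_iUnion (fun _ => measurableSet_ball) hD _).symm
    _ ≤ _ := lintegral_mono_set (iUnion_subset hDU)

end HomogeneousDensity

lemma interior_convexHull_subset_of_subset_closure {E : Type*} [NormedAddCommGroup E]
    [NormedSpace ℝ E] {Ω s : Set E} (hΩo : IsOpen Ω) (hΩ : Convex ℝ Ω) (hne : Ω.Nonempty)
    (hs : s ⊆ closure Ω) : interior (convexHull ℝ s) ⊆ Ω :=
  calc interior (convexHull ℝ s) ⊆ interior (closure Ω) :=
        interior_mono (convexHull_min hs hΩ.closure)
    _ = Ω := by
        rw [hΩ.interior_closure_eq_interior_of_nonempty_interior (hΩo.interior_eq.symm ▸ hne),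
          hΩo.interior_eq]

lemma Convex.mapsTo_smul_interior {E : Type*} [NormedAddCommGroup E] [NormedSpace ℝ E]
    {s : Set E} (hs : Convex ℝ s) (h0 : (0 : E) ∈ s) {t : ℝ} (ht : t ∈ Ioc 0 1) :
    MapsTo (t • ·) (interior s) (interior s) := fun y hy => by
  simpa using hs.add_smul_mem_interior h0 (y := y) (by rwa [zero_add]) ht

lemma affineSpan_eq_top_of_not_collinear {k V : Type*} [Field k] [AddCommGroup V] [Module k V]
    [FiniteDimensional k V] (hV : finrank k V = 2) {s : Set V} (hs : ¬Collinear k s) :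
    affineSpan k s = ⊤ := by
  obtain ⟨p, hp⟩ : s.Nonempty :=
    nonempty_iff_ne_empty.2 (by rintro rfl; exact hs (collinear_empty k V))
  rw [AffineSubspace.affineSpan_eq_top_iff_vectorSpan_eq_top_of_nonempty k _ _ ⟨p, hp⟩]
  have hgt : 1 < finrank k (vectorSpan k s) := not_le.1 (hs ∘ collinear_iff_finrank_le_one.2)
  have hle := Submodule.finrank_le (vectorSpan k s)
  exact Submodule.eq_top_of_finrank_eq (by omega)

/-- Let `Ω₀ = {(x,y) : x > 0, y > 0}` be the positive quadrant, a properly convex open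
subset of `ℙ²(ℝ)`.  Every pic of `Ω₀` whose vertex at infinity is the origin — every open
triangle contained in `Ω₀` with exactly one vertex at `(0,0) ∈ ∂Ω₀`, the other two
vertices `a, b` lying in `Ω₀` — has infinite Busemann volume. -/
theorem quadrant_pic_infinite_volume
    (Ω₀ : Set (EuclideanSpace ℝ (Fin 2))) (hΩ₀ : Ω₀ = {p | 0 < p 0 ∧ 0 < p 1})
    (a b : EuclideanSpace ℝ (Fin 2)) (ha : a ∈ Ω₀) (hb : b ∈ Ω₀)
    (hnc : ¬ Collinear ℝ ({0, a, b} : Set (EuclideanSpace ℝ (Fin 2)))) :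
    busemann Ω₀ (interior (convexHull ℝ ({0, a, b} : Set (EuclideanSpace ℝ (Fin 2))))) = ⊤ := by
  subst hΩ₀
  set T := interior (convexHull ℝ ({0, a, b} : Set ℝ²))
  have hTQ : T ⊆ quadrant := interior_convexHull_subset_of_subset_closure isOpen_quadrant
    convex_quadrant ⟨a, ha⟩ (insert_subset zero_mem_closure_quadrant
      (insert_subset (subset_closure ha) (singleton_subset_iff.2 (subset_closure hb))))
  obtain ⟨q, hq⟩ : T.Nonempty := interior_convexHull_nonempty_iff_affineSpan_eq_top.2
    (affineSpan_eq_top_of_not_collinear finrank_euclideanSpace_fin hnc)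
  have hq0 : q ≠ 0 := by rintro rfl; simpa [quadrant] using hTQ hq
  have hhalf : MapsTo ((2⁻¹ : ℝ) • ·) T T := (convex_convexHull ℝ _).mapsTo_smul_interior
    (subset_convexHull ℝ _ (mem_insert 0 _)) ⟨by norm_num, by norm_num⟩
  refine busemann_quadrant_eq_top isOpen_interior.measurableSet hTQ ?_
  simpa only [finrank_euclideanSpace_fin] using
    lintegral_inv_norm_pow_finrank_eq_top volume isOpen_interior hhalf hq hq0
end
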